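/- arXiv:2409.12168 — 2 statements merged into one kernel-verified Lean document; each statement's English description precedes it below -/
import Mathlib

section
/- Let T = (π, λ) be an ergodic interval exchange transformation on I and let J ⊆ I be a subinterval of form (★) with endpoints T^{m}(∂I_{α_J}) and T^{n}(∂I_{β_J}) for some α_J, β_J ∈ 𝒜 and m, n ∈ ℤ. Assume J does not contain any point from any connection of T, and let I = ⨆_{γ∈𝒜_J} ⨆_{i=0}^{h_γ−1} T^i(I_γ^J) be the associated Rokhlin tower decomposition. Then for every vector v ∈ ℝ₊^{𝒜_J} with Σ_{γ∈𝒜_J} v_γ h_γ = |I|, there exists a length vector λ̃ ∈ Λ^{𝒜,I} such that the IET T̃ = (π, λ̃), with exchanged intervals {Ĩ_α}_{α∈𝒜}, and the interval J̃ with endpoints T̃^{m}(∂Ĩ_{α_J}) and T̃^{n}(∂Ĩ_{β_J}) satisfy: the induced IET T̃_{J̃} = (π̃^{J̃}, λ̃^{J̃}) is defined on the alphabet 𝒜_J; λ̃^{J̃} = v and π̃^{J̃} = π^J (the combinatorics of T_J); and T̃_{J̃} has the same associated Rokhlin tower decomposition as T_J (same heights h_γ and same relative order of tower levels and of their images inside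 I). -/
open MeasureTheory Set
open scoped Classical

/-- An interval exchange transformation (IET) on the interval `[a, b)`:
an alphabet `Fin d`, bijections `perm0`, `perm1 : Fin d ≃ Fin d` describing the order of
the exchanged intervals before and after applying the map, and a positive length vector
`len` summing up to `b - a`.  The permutation datum is assumed non-reducible. -/
structure IET where
  d : ℕ
  hd : 0 < d
  a : ℝ
  b : ℝ
  hab : a < b
  perm0 : Fin d ≃ Fin d
  perm1 : Fin d ≃ Fin d
  len : Fin d → ℝ
  len_pos : ∀ α, 0 < len α
  len_sum : ∑ α, len α = b - a
  irred : ∀ k : ℕ, 0 < k → k < d → ¬ (∀ α, (perm0 α : ℕ) < k ↔ (perm1 α : ℕ) < k)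

namespace IET

variable (T : IET)

/-- The left endpoint `∂I_α` of the exchanged interval `I_α`. -/
noncomputable def lep (α : Fin T.d) : ℝ :=
  T.a + ∑ β ∈ Finset.univ.filter (fun β => T.perm0 β < T.perm0 α), T.len β

/-- The left endpoint of the image interval `T(I_α)`. -/
noncomputable def lepImg (α : Fin T.d) : ℝ :=
  T.a + ∑ β ∈ Finset.univ.filter (fun β => T.perm1 β < T.perm1 α), T.len β

/-- The translation amount on `I_α`. -/
noncomputable def transl (α : Fin T.d) : ℝ := T.lepImg α - T.lep α

/-- The exchanged interval `I_α`. -/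
noncomputable def interval (α : Fin T.d) : Set ℝ :=
  Set.Ico (T.lep α) (T.lep α + T.len α)

/-- The image interval `T(I_α)`. -/
noncomputable def intervalImg (α : Fin T.d) : Set ℝ :=
  Set.Ico (T.lepImg α) (T.lepImg α + T.len α)

/-- The IET as a self-map of `ℝ`: it translates each `I_α` onto its image and is
the identity outside `[a, b)`. -/
noncomputable def toFun (x : ℝ) : ℝ :=
  x + ∑ α, if x ∈ T.interval α then T.transl α else 0

/-- The inverse IET `T⁻¹` as a self-map of `ℝ`. -/
noncomputable def invFun (x : ℝ) : ℝ :=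
  x + ∑ α, if x ∈ T.intervalImg α then -T.transl α else 0

/-- The iterate `T^n`, `n : ℤ` (negative iterates via `invFun`). -/
noncomputable def iter (n : ℤ) (x : ℝ) : ℝ :=
  if 0 ≤ n then T.toFun^[n.toNat] x else T.invFun^[(-n).toNat] x

/-- `M(β) = min {n ≥ 1 | T^{-n}(∂I_β) = ∂I_α for some α with π₁ α ≠ 1}`, with the
convention `M(π₀⁻¹ 1) = 1`, and `∞` if no such `n` exists. -/
noncomputable def M (β : Fin T.d) : ℕ∞ :=
  if (T.perm0 β : ℕ) = 0 then 1
  else sInf {e : ℕ∞ | ∃ n : ℕ, e = (n : ℕ∞) ∧ 1 ≤ n ∧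
    ∃ α : Fin T.d, (T.perm1 α : ℕ) ≠ 0 ∧ T.invFun^[n] (T.lep β) = T.lep α}

/-- `N(β) = min {n ≥ 1 | T^{n}(∂I_β) = ∂I_α for some α with π₀ α ≠ 1}`, with the
convention `N(π₁⁻¹ 1) = 1`, and `∞` if no such `n` exists. -/
noncomputable def N (β : Fin T.d) : ℕ∞ :=
  if (T.perm1 β : ℕ) = 0 then 1
  else sInf {e : ℕ∞ | ∃ n : ℕ, e = (n : ℕ∞) ∧ 1 ≤ n ∧
    ∃ α : Fin T.d, (T.perm0 α : ℕ) ≠ 0 ∧ T.toFun^[n] (T.lep β) = T.lep α}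

/-- `s` is a (non-trivial) connection of `T`: the orbit segment
`{T^{-k}(∂I_β) | 0 ≤ k ≤ n}` where `π₀ β ≠ 1`, `π₁ α ≠ 1`, `n ≥ 1` and
`T^{-n}(∂I_β) = ∂I_α`. -/
def IsConnection (s : Set ℝ) : Prop :=
  ∃ (β α : Fin T.d) (n : ℕ), (T.perm0 β : ℕ) ≠ 0 ∧ (T.perm1 α : ℕ) ≠ 0 ∧ 1 ≤ n ∧
    T.invFun^[n] (T.lep β) = T.lep α ∧
    s = (fun k : ℕ => T.invFun^[k] (T.lep β)) '' {k : ℕ | k ≤ n}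

/-- `T` is symmetric: `π₁ ∘ π₀⁻¹ (i) = d + 1 - i` (here with `Fin d` indexing:
`perm1 α + perm0 α + 1 = d`). -/
def IsSymm : Prop := ∀ α, (T.perm1 α : ℕ) + (T.perm0 α : ℕ) + 1 = T.d

/-- The midpoint `c_α` of the exchanged interval `I_α`. -/
noncomputable def center (α : Fin T.d) : ℝ := T.lep α + T.len α / 2

/-- The midpoint `c_{1/2}` of the interval `I = [a, b)`. -/
noncomputable def centerHalf : ℝ := (T.a + T.b) / 2

/-- Midpoints indexed by `𝒜 ∪ {1/2}`; `none` plays the role of `1/2`. -/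
noncomputable def centerOpt (β : Option (Fin T.d)) : ℝ :=
  match β with
  | none => T.centerHalf
  | some α => T.center α

/-- `δ_{1/2}`. -/
def deltaHalf (β : Option (Fin T.d)) : ℕ :=
  match β with
  | none => 1
  | some _ => 0

/-- The symmetric reflection `𝓘_I (x) = a + b - x` of `I = [a, b)`. -/
noncomputable def refl (x : ℝ) : ℝ := T.a + T.b - x

/-- The first return time `r_J(x) = min {n ≥ 1 | T^n x ∈ J}`. -/
noncomputable def returnTime (J : Set ℝ) (x : ℝ) : ℕ :=
  sInf {n : ℕ | 1 ≤ n ∧ T.toFun^[n] x ∈ J}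

/-- The first return map `T_J`. -/
noncomputable def firstReturn (J : Set ℝ) (x : ℝ) : ℝ := T.toFun^[T.returnTime J x] x

/-- The first backward return time `b_J(x) = min {n ≥ 1 | T^{-n} x ∈ J}`. -/
noncomputable def backTime (J : Set ℝ) (x : ℝ) : ℕ :=
  sInf {n : ℕ | 1 ≤ n ∧ T.invFun^[n] x ∈ J}

/-- The first backward return map `p_J` (the inverse of the first return map `T_J`). -/
noncomputable def backReturn (J : Set ℝ) (x : ℝ) : ℝ := T.invFun^[T.backTime J x] x

/-- `m_{J,α} = inf {n ≥ 0 | T^{-n}(∂I_α) ∈ interior J}`. -/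
noncomputable def mJ (J : Set ℝ) (α : Fin T.d) : ℕ :=
  sInf {n : ℕ | T.invFun^[n] (T.lep α) ∈ interior J}

/-- `J` is of form (★): a subinterval `[a_J, b_J) ⊆ I` whose endpoints are iterates
`T^{m₀}(∂I_{α_J})`, `T^{n₀}(∂I_{β_J})` of left endpoints which do not visit `J` at any
earlier time between `0` and `m₀` (resp. `n₀`). -/
def IsStarForm (J : Set ℝ) : Prop :=
  ∃ (aJ bJ : ℝ) (αJ βJ : Fin T.d) (m₀ n₀ : ℤ),
    aJ < bJ ∧ J = Set.Ico aJ bJ ∧ J ⊆ Set.Ico T.a T.b ∧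
    aJ = T.iter m₀ (T.lep αJ) ∧ bJ = T.iter n₀ (T.lep βJ) ∧
    (∀ m : ℤ, (0 ≤ m ∧ m ≤ m₀ ∨ m₀ ≤ m ∧ m ≤ 0) → m ≠ m₀ → T.iter m (T.lep αJ) ∉ J) ∧
    (∀ n : ℤ, (0 ≤ n ∧ n ≤ n₀ ∨ n₀ ≤ n ∧ n ≤ 0) → n ≠ n₀ → T.iter n (T.lep βJ) ∉ J)

/-- `J` is a `β`-symmetric interval (`β : Option (Fin T.d)`, `none` = `1/2`-symmetric):
`J = [c_β - Δ, c_β + Δ)` with `Δ > 0`, contained in `I_β` (resp. in `I`). -/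
def IsSymmetricInterval (J : Set ℝ) (β : Option (Fin T.d)) : Prop :=
  ∃ Δ : ℝ, 0 < Δ ∧ J = Set.Ico (T.centerOpt β - Δ) (T.centerOpt β + Δ) ∧
    (match β with
      | some γ => J ⊆ T.interval γ
      | none => J ⊆ Set.Ico T.a T.b)

/-- `x` is a left endpoint of one of the intervals exchanged by the first return map
`T_J`, where `J = [aJ, bJ)`: either `x = aJ`, or the forward orbit of `x` before its
first return to `J` meets a left endpoint `∂I_α` of `T` or the right endpoint `bJ`. -/
def IsExchLeftEndpoint (J : Set ℝ) (aJ bJ : ℝ) (x : ℝ) : Prop :=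
  x = aJ ∨ ∃ k : ℕ, k < T.returnTime J x ∧
    ((∃ α : Fin T.d, T.toFun^[k] x = T.lep α) ∨ (1 ≤ k ∧ T.toFun^[k] x = bJ))

/-- A Rokhlin tower decomposition of `I = [a, b)` over `J = [aJ, bJ)` associated with the
first return map `T_J`: the bases `[base γ, base γ + blen γ)` partition `J`, the return
time on the base `γ` is constantly `h γ`, each `T^i` (`i ≤ h γ`) acts as a translation on
the base `γ`, and the tower levels `T^i([base γ, base γ + blen γ))`, `i < h γ`, are
pairwise disjoint and partition `I`. -/
def IsTowerDecomp (aJ bJ : ℝ) {k : ℕ} (base blen : Fin k → ℝ) (h : Fin k → ℕ) : Prop :=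
  (∀ γ, 0 < blen γ) ∧ (∀ γ, 1 ≤ h γ) ∧
  Pairwise (Function.onFun Disjoint fun γ => Set.Ico (base γ) (base γ + blen γ)) ∧
  (⋃ γ, Set.Ico (base γ) (base γ + blen γ)) = Set.Ico aJ bJ ∧
  (∀ γ, ∀ i ≤ h γ, ∀ x ∈ Set.Ico (base γ) (base γ + blen γ),
    T.toFun^[i] x - T.toFun^[i] (base γ) = x - base γ) ∧
  (∀ γ, ∀ x ∈ Set.Ico (base γ) (base γ + blen γ), T.returnTime (Set.Ico aJ bJ) x = h γ) ∧
  (⋃ γ, ⋃ i ∈ Finset.range (h γ), T.toFun^[i] '' Set.Ico (base γ) (base γ + blen γ))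
    = Set.Ico T.a T.b ∧
  (∀ γ γ' : Fin k, ∀ i i' : ℕ, i < h γ → i' < h γ' → (γ, i) ≠ (γ', i') →
    Disjoint (T.toFun^[i] '' Set.Ico (base γ) (base γ + blen γ))
      (T.toFun^[i'] '' Set.Ico (base γ') (base γ' + blen γ')))

/-- Replace the length data of an IET, keeping the combinatorial data. -/
noncomputable abbrev replaceLen (len' : Fin T.d → ℝ) (h1 : ∀ α, 0 < len' α)
    (h2 : ∑ α, len' α = T.b - T.a) : IET :=
  { T with len := len', len_pos := h1, len_sum := h2 }

end IET

open IET


/-! ### Auxiliary layer 1: generic IET lemmas -/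

namespace IETAux

open IET

variable (U : IET)

/-- Cumulative sum function. -/
noncomputable def Cc (π : Fin U.d ≃ Fin U.d) (j : ℕ) : ℝ :=
  U.a + ∑ β ∈ Finset.univ.filter (fun β => ((π β : Fin U.d) : ℕ) < j), U.len β

/-- Generic position function (specializes to `lep`, `lepImg`). -/
noncomputable def gpos (π : Fin U.d ≃ Fin U.d) (α : Fin U.d) : ℝ :=
  U.a + ∑ β ∈ Finset.univ.filter (fun β => π β < π α), U.len β

lemma lep_eq_gpos (α : Fin U.d) : U.lep α = gpos U U.perm0 α := rfl

lemma lepImg_eq_gpos (α : Fin U.d) : U.lepImg α = gpos U U.perm1 α := rfl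

variable (π : Fin U.d ≃ Fin U.d)

lemma Cc_zero : Cc U π 0 = U.a := by
  simp [Cc]

lemma Cc_succ (j : ℕ) :
    Cc U π (j + 1) = Cc U π j + ∑ β, if ((π β : Fin U.d) : ℕ) = j then U.len β else 0 := by
  unfold Cc
  rw [Finset.sum_filter, Finset.sum_filter]
  rw [add_assoc, ← Finset.sum_add_distrib]
  congr 1
  apply Finset.sum_congr rfl
  intro β _
  by_cases h1 : ((π β : Fin U.d) : ℕ) < j
  · rw [if_pos (by omega), if_pos h1, if_neg (by omega), add_zero]
  · by_cases h2 : ((π β : Fin U.d) : ℕ) = j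
    · rw [if_pos (by omega), if_neg h1, if_pos h2, zero_add]
    · rw [if_neg (by omega), if_neg h1, if_neg h2, add_zero]

lemma Cc_succ_lt (j : ℕ) (hj : j < U.d) :
    Cc U π (j + 1) = Cc U π j + U.len (π.symm ⟨j, hj⟩) := by
  rw [Cc_succ]
  congr 1
  rw [Finset.sum_eq_single (π.symm ⟨j, hj⟩)]
  · rw [if_pos]; simp
  · intro β _ hne
    rw [if_neg]
    intro hval
    apply hne
    have : π β = ⟨j, hj⟩ := Fin.ext hval
    rw [← this]; simp
  · intro habs; exact absurd (Finset.mem_univ _) habs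

lemma Cc_mono {j j' : ℕ} (hle : j ≤ j') : Cc U π j ≤ Cc U π j' := by
  unfold Cc
  have hsub : Finset.univ.filter (fun β => ((π β : Fin U.d) : ℕ) < j)
      ⊆ Finset.univ.filter (fun β => ((π β : Fin U.d) : ℕ) < j') := by
    intro β hb
    rw [Finset.mem_filter] at hb ⊢
    exact ⟨hb.1, lt_of_lt_of_le hb.2 hle⟩
  have := Finset.sum_le_sum_of_subset_of_nonneg hsub
    (fun β _ _ => le_of_lt (U.len_pos β))
  linarith

lemma Cc_d : Cc U π U.d = U.b := by
  unfold Cc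
  rw [Finset.filter_true_of_mem (fun β _ => (π β).isLt), U.len_sum]
  ring

lemma gpos_eq_Cc (α : Fin U.d) : gpos U π α = Cc U π ((π α : Fin U.d) : ℕ) := by
  unfold gpos Cc
  congr 1

lemma gpos_add_len (α : Fin U.d) :
    gpos U π α + U.len α = Cc U π (((π α : Fin U.d) : ℕ) + 1) := by
  rw [Cc_succ_lt U π _ (π α).isLt, gpos_eq_Cc]
  congr 1
  congr 1
  simp

lemma a_le_gpos (α : Fin U.d) : U.a ≤ gpos U π α := by
  rw [gpos_eq_Cc, ← Cc_zero U π]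
  exact Cc_mono U π (Nat.zero_le _)

lemma gpos_add_len_le_b (α : Fin U.d) : gpos U π α + U.len α ≤ U.b := by
  rw [gpos_add_len, ← Cc_d U π]
  exact Cc_mono U π (π α).isLt

lemma gpos_disjoint {α β : Fin U.d} (hne : α ≠ β) (x : ℝ)
    (hx : x ∈ Set.Ico (gpos U π α) (gpos U π α + U.len α))
    (hy : x ∈ Set.Ico (gpos U π β) (gpos U π β + U.len β)) : False := by
  rcases lt_trichotomy ((π α : Fin U.d) : ℕ) ((π β : Fin U.d) : ℕ) with hc | hc | hc
  · have h1 : gpos U π α + U.len α ≤ gpos U π β := by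
      rw [gpos_add_len, gpos_eq_Cc]; exact Cc_mono U π hc
    have := hx.2; have := hy.1; linarith
  · exact hne (π.injective (Fin.ext hc))
  · have h1 : gpos U π β + U.len β ≤ gpos U π α := by
      rw [gpos_add_len, gpos_eq_Cc]; exact Cc_mono U π hc
    have := hy.2; have := hx.1; linarith

lemma gpos_cover {x : ℝ} (hx : x ∈ Set.Ico U.a U.b) :
    ∃ α, x ∈ Set.Ico (gpos U π α) (gpos U π α + U.len α) := by
  classical
  set S : Finset (Fin U.d) := Finset.univ.filter (fun α => gpos U π α ≤ x) with hS
  have hSne : S.Nonempty := by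
    refine ⟨π.symm ⟨0, U.hd⟩, ?_⟩
    rw [hS, Finset.mem_filter]
    refine ⟨Finset.mem_univ _, ?_⟩
    rw [gpos_eq_Cc]
    simp only [Equiv.apply_symm_apply]
    rw [Cc_zero]
    exact hx.1
  obtain ⟨α, hαS, hmax⟩ := S.exists_max_image (fun α => ((π α : Fin U.d) : ℕ)) hSne
  have hαx : gpos U π α ≤ x := by
    rw [hS, Finset.mem_filter] at hαS; exact hαS.2
  refine ⟨α, hαx, ?_⟩
  by_contra hcon
  push_neg at hcon
  by_cases hlast : ((π α : Fin U.d) : ℕ) + 1 = U.d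
  · have : gpos U π α + U.len α = U.b := by
      rw [gpos_add_len, hlast, Cc_d]
    rw [this] at hcon
    exact absurd hx.2 (not_lt.mpr hcon)
  · have hjd : ((π α : Fin U.d) : ℕ) + 1 < U.d := by
      have := (π α).isLt; omega
    set α' := π.symm ⟨((π α : Fin U.d) : ℕ) + 1, hjd⟩ with hα'
    have hα'S : α' ∈ S := by
      rw [hS, Finset.mem_filter]
      refine ⟨Finset.mem_univ _, ?_⟩
      rw [gpos_eq_Cc]
      simp only [hα', Equiv.apply_symm_apply]
      rw [← gpos_add_len]
      exact hcon
    have := hmax α' hα'S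
    simp only [hα', Equiv.apply_symm_apply] at this
    omega

lemma interval_eq (α : Fin U.d) :
    U.interval α = Set.Ico (gpos U U.perm0 α) (gpos U U.perm0 α + U.len α) := rfl

lemma intervalImg_eq (α : Fin U.d) :
    U.intervalImg α = Set.Ico (gpos U U.perm1 α) (gpos U U.perm1 α + U.len α) := rfl

lemma toFun_eq {x : ℝ} {α : Fin U.d} (hx : x ∈ U.interval α) :
    U.toFun x = x + U.transl α := by
  unfold IET.toFun
  congr 1
  rw [Finset.sum_eq_single α]
  · rw [if_pos hx]
  · intro β _ hne
    rw [if_neg]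
    intro hxb
    exact gpos_disjoint U U.perm0 hne x (by rw [← interval_eq]; exact hxb)
      (by rw [← interval_eq]; exact hx)
  · intro habs; exact absurd (Finset.mem_univ _) habs

lemma invFun_eq {x : ℝ} {α : Fin U.d} (hx : x ∈ U.intervalImg α) :
    U.invFun x = x - U.transl α := by
  unfold IET.invFun
  rw [sub_eq_add_neg]
  congr 1
  rw [Finset.sum_eq_single α]
  · rw [if_pos hx]
  · intro β _ hne
    rw [if_neg]
    intro hxb
    exact gpos_disjoint U U.perm1 hne x (by rw [← intervalImg_eq]; exact hxb)
      (by rw [← intervalImg_eq]; exact hx)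
  · intro habs; exact absurd (Finset.mem_univ _) habs

lemma interval_subset (α : Fin U.d) : U.interval α ⊆ Set.Ico U.a U.b := by
  rw [interval_eq]
  intro x hx
  exact ⟨le_trans (a_le_gpos U U.perm0 α) hx.1,
    lt_of_lt_of_le hx.2 (gpos_add_len_le_b U U.perm0 α)⟩

lemma intervalImg_subset (α : Fin U.d) : U.intervalImg α ⊆ Set.Ico U.a U.b := by
  rw [intervalImg_eq]
  intro x hx
  exact ⟨le_trans (a_le_gpos U U.perm1 α) hx.1,
    lt_of_lt_of_le hx.2 (gpos_add_len_le_b U U.perm1 α)⟩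

lemma mem_intervalImg_toFun {x : ℝ} {α : Fin U.d} (hx : x ∈ U.interval α) :
    U.toFun x ∈ U.intervalImg α := by
  rw [toFun_eq U hx]
  rcases hx with ⟨h1, h2⟩
  unfold IET.transl
  refine ⟨by linarith, by linarith⟩

lemma mem_interval_invFun {x : ℝ} {α : Fin U.d} (hx : x ∈ U.intervalImg α) :
    U.invFun x ∈ U.interval α := by
  rw [invFun_eq U hx]
  rcases hx with ⟨h1, h2⟩
  unfold IET.transl
  refine ⟨by linarith, by linarith⟩

lemma toFun_of_not_mem {x : ℝ} (hx : x ∉ Set.Ico U.a U.b) : U.toFun x = x := by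
  unfold IET.toFun
  rw [Finset.sum_eq_zero, add_zero]
  intro β _
  rw [if_neg]
  intro hmem
  exact hx (interval_subset U β hmem)

lemma invFun_of_not_mem {x : ℝ} (hx : x ∉ Set.Ico U.a U.b) : U.invFun x = x := by
  unfold IET.invFun
  rw [Finset.sum_eq_zero, add_zero]
  intro β _
  rw [if_neg]
  intro hmem
  exact hx (intervalImg_subset U β hmem)

lemma toFun_mem {x : ℝ} (hx : x ∈ Set.Ico U.a U.b) : U.toFun x ∈ Set.Ico U.a U.b := by
  obtain ⟨α, hα⟩ := gpos_cover U U.perm0 hx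
  rw [← interval_eq] at hα
  exact intervalImg_subset U α (mem_intervalImg_toFun U hα)

lemma invFun_mem {x : ℝ} (hx : x ∈ Set.Ico U.a U.b) : U.invFun x ∈ Set.Ico U.a U.b := by
  obtain ⟨α, hα⟩ := gpos_cover U U.perm1 hx
  rw [← intervalImg_eq] at hα
  exact interval_subset U α (mem_interval_invFun U hα)

lemma invFun_toFun (x : ℝ) : U.invFun (U.toFun x) = x := by
  by_cases hx : x ∈ Set.Ico U.a U.b
  · obtain ⟨α, hα⟩ := gpos_cover U U.perm0 hx
    rw [← interval_eq] at hα
    rw [invFun_eq U (mem_intervalImg_toFun U hα), toFun_eq U hα]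
    ring
  · rw [toFun_of_not_mem U hx, invFun_of_not_mem U hx]

lemma toFun_invFun (x : ℝ) : U.toFun (U.invFun x) = x := by
  by_cases hx : x ∈ Set.Ico U.a U.b
  · obtain ⟨α, hα⟩ := gpos_cover U U.perm1 hx
    rw [← intervalImg_eq] at hα
    rw [toFun_eq U (mem_interval_invFun U hα), invFun_eq U hα]
    ring
  · rw [invFun_of_not_mem U hx, toFun_of_not_mem U hx]

lemma invFun_toFun_iter (N : ℕ) (x : ℝ) : U.invFun^[N] (U.toFun^[N] x) = x :=
  (Function.LeftInverse.iterate (invFun_toFun U) N) x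

lemma toFun_invFun_iter (N : ℕ) (x : ℝ) : U.toFun^[N] (U.invFun^[N] x) = x :=
  (Function.LeftInverse.iterate (toFun_invFun U) N) x

lemma toFun_iter_mem {x : ℝ} (hx : x ∈ Set.Ico U.a U.b) (N : ℕ) :
    U.toFun^[N] x ∈ Set.Ico U.a U.b := by
  induction N with
  | zero => exact hx
  | succ N ih => rw [Function.iterate_succ_apply']; exact toFun_mem U ih

lemma invFun_iter_mem {x : ℝ} (hx : x ∈ Set.Ico U.a U.b) (N : ℕ) :
    U.invFun^[N] x ∈ Set.Ico U.a U.b := by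
  induction N with
  | zero => exact hx
  | succ N ih => rw [Function.iterate_succ_apply']; exact invFun_mem U ih

lemma toFun_injective : Function.Injective U.toFun :=
  Function.LeftInverse.injective (invFun_toFun U)

/-- Telescoping sum over all intervals. -/
lemma telescope (g : ℝ → ℝ) :
    ∑ α, (g (gpos U π α + U.len α) - g (gpos U π α)) = g U.b - g U.a := by
  have key : ∀ α, g (gpos U π α + U.len α) - g (gpos U π α)
      = (fun j => g (Cc U π j)) (((π α : Fin U.d) : ℕ) + 1)
        - (fun j => g (Cc U π j)) ((π α : Fin U.d) : ℕ) := by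
    intro α
    simp only
    rw [gpos_add_len, gpos_eq_Cc]
  calc ∑ α, (g (gpos U π α + U.len α) - g (gpos U π α))
      = ∑ α, ((fun j => g (Cc U π j)) (((π α : Fin U.d) : ℕ) + 1)
        - (fun j => g (Cc U π j)) ((π α : Fin U.d) : ℕ)) := by
        exact Finset.sum_congr rfl (fun α _ => key α)
    _ = ∑ β : Fin U.d, ((fun j => g (Cc U π j)) (((β : Fin U.d) : ℕ) + 1)
        - (fun j => g (Cc U π j)) ((β : Fin U.d) : ℕ)) :=
        Equiv.sum_comp π (fun β => (fun j => g (Cc U π j)) (((β : Fin U.d) : ℕ) + 1)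
          - (fun j => g (Cc U π j)) ((β : Fin U.d) : ℕ))
    _ = ∑ j ∈ Finset.range U.d, (g (Cc U π (j + 1)) - g (Cc U π j)) := by
        rw [Fin.sum_univ_eq_sum_range (fun j => g (Cc U π (j+1)) - g (Cc U π j))]
    _ = g (Cc U π U.d) - g (Cc U π 0) := Finset.sum_range_sub (fun j => g (Cc U π j)) U.d
    _ = g U.b - g U.a := by rw [Cc_d, Cc_zero]

/-- Partial telescoping sum. -/
lemma telescope_partial (g : ℝ → ℝ) (α : Fin U.d) :
    ∑ β ∈ Finset.univ.filter (fun β => π β < π α),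
      (g (gpos U π β + U.len β) - g (gpos U π β))
      = g (gpos U π α) - g U.a := by
  classical
  have : ∑ β ∈ Finset.univ.filter (fun β => π β < π α),
      (g (gpos U π β + U.len β) - g (gpos U π β))
      = ∑ j ∈ Finset.range ((π α : Fin U.d) : ℕ), (g (Cc U π (j+1)) - g (Cc U π j)) := by
    apply Finset.sum_nbij' (fun β => ((π β : Fin U.d) : ℕ)) (fun j => π.symm ⟨j % U.d, Nat.mod_lt _ U.hd⟩)
    · intro β hβ
      rw [Finset.mem_filter] at hβ
      rw [Finset.mem_range]
      exact Fin.lt_def.mp hβ.2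
    · intro j hj
      rw [Finset.mem_range] at hj
      rw [Finset.mem_filter]
      refine ⟨Finset.mem_univ _, ?_⟩
      have hjd : j < U.d := lt_trans hj (π α).isLt
      rw [Fin.lt_def]
      simp only [Equiv.apply_symm_apply]
      simp only [Nat.mod_eq_of_lt hjd]
      exact hj
    · intro β hβ
      rw [Finset.mem_filter] at hβ
      have : ((π β : Fin U.d) : ℕ) < U.d := (π β).isLt
      simp only [Nat.mod_eq_of_lt this, Fin.eta]
      simp
    · intro j hj
      rw [Finset.mem_range] at hj
      have hjd : j < U.d := lt_trans hj (π α).isLt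
      simp only [Equiv.apply_symm_apply, Nat.mod_eq_of_lt hjd]
    · intro β hβ
      rw [gpos_add_len, gpos_eq_Cc]
  rw [this, Finset.sum_range_sub (fun j => g (Cc U π j)), gpos_eq_Cc, Cc_zero]

end IETAux


/-! ### Auxiliary layer 2: piecewise rescaling maps -/

namespace IETAux

variable {ι : Type*} [Fintype ι]

/-- The piecewise-affine rescaling map determined by a family of disjoint intervals
`[w i, w i + ℓ i)` covering `[a,b)` and slopes `s i`. -/
noncomputable def resc (a : ℝ) (w ℓ s : ι → ℝ) (x : ℝ) : ℝ :=
  a + ∑ i, s i * (min (max x (w i)) (w i + ℓ i) - w i)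

section RescLemmas

variable {a b : ℝ} {w ℓ s : ι → ℝ}

lemma resc_continuous : Continuous (resc a w ℓ s) := by
  unfold resc
  apply Continuous.add continuous_const
  apply continuous_finset_sum
  intro i _
  exact Continuous.mul continuous_const
    (Continuous.sub (Continuous.min (Continuous.max continuous_id continuous_const)
      continuous_const) continuous_const)

lemma resc_mono (hs : ∀ i, 0 ≤ s i) {x y : ℝ} (hxy : x ≤ y) :
    resc a w ℓ s x ≤ resc a w ℓ s y := by
  unfold resc
  apply add_le_add le_rfl
  apply Finset.sum_le_sum
  intro i _
  have hclamp : min (max x (w i)) (w i + ℓ i) ≤ min (max y (w i)) (w i + ℓ i) :=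
    min_le_min (max_le_max hxy le_rfl) le_rfl
  have := hs i
  nlinarith

lemma resc_left (hl : ∀ i, 0 < ℓ i) (hw : ∀ i, a ≤ w i) : resc a w ℓ s a = a := by
  unfold resc
  rw [Finset.sum_eq_zero, add_zero]
  intro i _
  rw [max_eq_right (hw i), min_eq_left (by nlinarith [hl i]), sub_self, mul_zero]

lemma resc_right (hwb : ∀ i, w i + ℓ i ≤ b) (hl : ∀ i, 0 < ℓ i)
    (hsum : ∑ i, s i * ℓ i = b - a) : resc a w ℓ s b = b := by
  unfold resc
  have : ∀ i ∈ Finset.univ, s i * (min (max b (w i)) (w i + ℓ i) - w i) = s i * ℓ i := by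
    intro i _
    rw [max_eq_left (by nlinarith [hwb i, hl i]), min_eq_right (hwb i)]
    ring
  rw [Finset.sum_congr rfl this, hsum]
  ring

/-- Value of `resc` on the piece `i` (including the right endpoint). -/
lemma resc_piece (hl : ∀ i, 0 < ℓ i)
    (hdisj : ∀ i j, i ≠ j → w i + ℓ i ≤ w j ∨ w j + ℓ j ≤ w i)
    {i : ι} {x : ℝ} (h1 : w i ≤ x) (h2 : x ≤ w i + ℓ i) :
    resc a w ℓ s x = resc a w ℓ s (w i) + s i * (x - w i) := by
  unfold resc
  have key : ∀ j ∈ Finset.univ,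
      s j * (min (max x (w j)) (w j + ℓ j) - w j)
        - s j * (min (max (w i) (w j)) (w j + ℓ j) - w j)
      = if j = i then s i * (x - w i) else 0 := by
    intro j _
    by_cases hji : j = i
    · subst hji
      rw [if_pos rfl]
      rw [max_eq_left h1, min_eq_left h2, max_self, min_eq_left (by linarith [h2, h1])]
      ring
    · rw [if_neg hji]
      rcases hdisj j i hji with hc | hc
      · -- piece j entirely left of piece i : both clamps are full
        have hlj := hl j
        rw [max_eq_left (by linarith), min_eq_right (by linarith),
            max_eq_left (by linarith), min_eq_right (by linarith)]
        ring
      · -- piece j entirely right of piece i : both clamps are trivial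
        have hlj := hl j
        rw [max_eq_right (by linarith), min_eq_left (by linarith),
            max_eq_right (by linarith), min_eq_left (by linarith)]
        ring
  have := Finset.sum_congr rfl key
  rw [Finset.sum_sub_distrib] at this
  rw [Finset.sum_ite_eq' Finset.univ i (fun _ => s i * (x - w i))] at this
  rw [if_pos (Finset.mem_univ i)] at this
  linarith

lemma resc_strict (hl : ∀ i, 0 < ℓ i) (hs : ∀ i, 0 < s i)
    (hcover : ∀ x, a ≤ x → x < b → ∃ i, w i ≤ x ∧ x < w i + ℓ i)
    {x y : ℝ} (hax : a ≤ x) (hxy : x < y) (hyb : y ≤ b) :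
    resc a w ℓ s x < resc a w ℓ s y := by
  obtain ⟨i, hi1, hi2⟩ := hcover x hax (lt_of_lt_of_le hxy hyb)
  unfold resc
  apply add_lt_add_of_le_of_lt le_rfl
  apply Finset.sum_lt_sum
  · intro j _
    have : min (max x (w j)) (w j + ℓ j) ≤ min (max y (w j)) (w j + ℓ j) :=
      min_le_min (max_le_max (le_of_lt hxy) le_rfl) le_rfl
    nlinarith [le_of_lt (hs j)]
  · refine ⟨i, Finset.mem_univ i, ?_⟩
    have e1 : min (max x (w i)) (w i + ℓ i) = x := by
      rw [max_eq_left hi1, min_eq_left (le_of_lt hi2)]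
    have e2 : x < min (max y (w i)) (w i + ℓ i) := by
      apply lt_min
      · exact lt_of_lt_of_le hxy (le_max_left _ _)
      · exact hi2
    rw [e1]
    have := hs i
    nlinarith

lemma resc_mem_Ico (hl : ∀ i, 0 < ℓ i) (hs : ∀ i, 0 < s i) (hw : ∀ i, a ≤ w i)
    (hwb : ∀ i, w i + ℓ i ≤ b) (hsum : ∑ i, s i * ℓ i = b - a)
    (hcover : ∀ x, a ≤ x → x < b → ∃ i, w i ≤ x ∧ x < w i + ℓ i)
    {x : ℝ} (hx : x ∈ Set.Ico a b) : resc a w ℓ s x ∈ Set.Ico a b := by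
  have e1 : resc a w ℓ s a = a := resc_left hl hw
  have e2 : resc a w ℓ s b = b := resc_right hwb hl hsum
  have m1 : resc a w ℓ s a ≤ resc a w ℓ s x := resc_mono (fun i => le_of_lt (hs i)) hx.1
  have m2 : resc a w ℓ s x < resc a w ℓ s b := resc_strict hl hs hcover hx.1 hx.2 le_rfl
  constructor
  · linarith
  · linarith

/-- Image of a subinterval `[u, z) ⊆ [a, b)`. -/
lemma resc_image (hl : ∀ i, 0 < ℓ i) (hs : ∀ i, 0 < s i) (hw : ∀ i, a ≤ w i)
    (hwb : ∀ i, w i + ℓ i ≤ b) (hsum : ∑ i, s i * ℓ i = b - a)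
    (hcover : ∀ x, a ≤ x → x < b → ∃ i, w i ≤ x ∧ x < w i + ℓ i)
    {u z : ℝ} (hau : a ≤ u) (hzb : z ≤ b) :
    resc a w ℓ s '' Set.Ico u z = Set.Ico (resc a w ℓ s u) (resc a w ℓ s z) := by
  have hs' : ∀ i, 0 ≤ s i := fun i => le_of_lt (hs i)
  ext y
  constructor
  · rintro ⟨x, ⟨hx1, hx2⟩, rfl⟩
    exact ⟨resc_mono hs' hx1, resc_strict hl hs hcover (le_trans hau hx1) hx2 hzb⟩
  · rintro ⟨hy1, hy2⟩
    by_cases huz : u < z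
    · have hab : a ≤ b := le_trans hau (le_trans (le_of_lt huz) hzb)
      have hya : a ≤ y := by
        have : resc a w ℓ s a ≤ resc a w ℓ s u := resc_mono hs' hau
        rw [resc_left hl hw (s := s)] at this
        linarith
      have hyb : y < b := by
        have : resc a w ℓ s z ≤ resc a w ℓ s b := resc_mono hs' hzb
        rw [resc_right hwb hl hsum] at this
        linarith
      have hcont : ContinuousOn (resc a w ℓ s) (Set.Icc a b) :=
        resc_continuous.continuousOn
      have hsur : Set.Icc a b ⊆ resc a w ℓ s '' Set.Icc a b := by
        have := intermediate_value_Icc hab hcont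
        rw [resc_left hl hw (s := s), resc_right hwb hl hsum] at this
        exact this
      obtain ⟨x, hxab, hxy⟩ := hsur ⟨hya, le_of_lt hyb⟩
      refine ⟨x, ⟨?_, ?_⟩, hxy⟩
      · by_contra hcon
        push_neg at hcon
        have : resc a w ℓ s x < resc a w ℓ s u :=
          resc_strict hl hs hcover hxab.1 hcon (le_trans (le_of_lt huz) hzb)
        rw [hxy] at this
        linarith
      · by_contra hcon
        push_neg at hcon
        have : resc a w ℓ s z ≤ resc a w ℓ s x := resc_mono hs' hcon
        rw [hxy] at this
        linarith
    · exfalso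
      push_neg at huz
      have : resc a w ℓ s z ≤ resc a w ℓ s u := resc_mono hs' huz
      linarith

end RescLemmas

end IETAux


/-! ### Auxiliary layer 3: the tower construction -/

namespace IETAux

/-- Index type for tower levels. -/
abbrev Idx {k : ℕ} (h : Fin k → ℕ) := Σ γ : Fin k, Fin (h γ)

/-- Left endpoint of the `i`-th level of tower `γ`. -/
noncomputable def lev (T : IET) {k : ℕ} (base : Fin k → ℝ) (γ : Fin k) (i : ℕ) : ℝ :=
  T.toFun^[i] (base γ)

section Tower

variable {T : IET} {aJ bJ : ℝ} {k : ℕ} {base blen : Fin k → ℝ} {h : Fin k → ℕ}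
  {v : Fin k → ℝ}

lemma ico_sub_bounds {u l c d : ℝ} (hl : 0 < l)
    (hsub : Set.Ico u (u + l) ⊆ Set.Ico c d) : c ≤ u ∧ u + l ≤ d := by
  have hu : u ∈ Set.Ico c d := hsub ⟨le_rfl, by linarith⟩
  refine ⟨hu.1, ?_⟩
  by_contra hcon
  push_neg at hcon
  have : d ∈ Set.Ico u (u + l) := ⟨by linarith [hu.2], hcon⟩
  exact absurd (hsub this).2 (lt_irrefl d)

lemma dichotomy_of_disjoint {u u' l l' : ℝ} (hl : 0 < l) (hl' : 0 < l')
    (hd : Disjoint (Set.Ico u (u + l)) (Set.Ico u' (u' + l'))) :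
    u + l ≤ u' ∨ u' + l' ≤ u := by
  by_contra hcon
  push_neg at hcon
  have hmem : max u u' ∈ Set.Ico u (u + l) ∩ Set.Ico u' (u' + l') := by
    constructor
    · exact ⟨le_max_left _ _, by rcases max_cases u u' with ⟨he, _⟩ | ⟨he, _⟩ <;>
        rw [he] <;> linarith [hcon.1, hcon.2]⟩
    · exact ⟨le_max_right _ _, by rcases max_cases u u' with ⟨he, _⟩ | ⟨he, _⟩ <;>
        rw [he] <;> linarith [hcon.1, hcon.2]⟩
  rw [Set.disjoint_iff_inter_eq_empty] at hd
  rw [hd] at hmem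
  exact hmem

lemma idx_pair_ne {p q : Idx h} (hpq : p ≠ q) :
    (p.1, (p.2 : ℕ)) ≠ (q.1, (q.2 : ℕ)) := by
  obtain ⟨γ, i⟩ := p
  obtain ⟨γ', i'⟩ := q
  intro hc
  rw [Prod.mk.injEq] at hc
  obtain ⟨h1, h2⟩ := hc
  subst h1
  exact hpq (congrArg (Sigma.mk γ) (Fin.ext h2))

section WithHyp

variable (P1 : ∀ γ, 0 < blen γ) (P2 : ∀ γ, 1 ≤ h γ)
  (P4 : (⋃ γ, Set.Ico (base γ) (base γ + blen γ)) = Set.Ico aJ bJ)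
  (P5 : ∀ γ, ∀ i ≤ h γ, ∀ x ∈ Set.Ico (base γ) (base γ + blen γ),
    T.toFun^[i] x - T.toFun^[i] (base γ) = x - base γ)
  (hsub : Set.Ico aJ bJ ⊆ Set.Ico T.a T.b)

include P4 in
lemma base_sub_J (γ : Fin k) :
    Set.Ico (base γ) (base γ + blen γ) ⊆ Set.Ico aJ bJ := by
  rw [← P4]
  exact Set.subset_iUnion (fun γ => Set.Ico (base γ) (base γ + blen γ)) γ

include P1 P4 hsub in
lemma base_mem_Iab (γ : Fin k) : base γ ∈ Set.Ico T.a T.b :=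
  hsub (base_sub_J P4 γ ⟨le_rfl, by linarith [P1 γ]⟩)

include P1 P4 hsub in
lemma lev_mem (γ : Fin k) (i : ℕ) : lev T base γ i ∈ Set.Ico T.a T.b :=
  IETAux.toFun_iter_mem T (base_mem_Iab P1 P4 hsub γ) i

include P5 in
lemma level_img (γ : Fin k) {i : ℕ} (hi : i ≤ h γ) :
    T.toFun^[i] '' Set.Ico (base γ) (base γ + blen γ)
      = Set.Ico (lev T base γ i) (lev T base γ i + blen γ) := by
  ext y
  constructor
  · rintro ⟨x, hx, rfl⟩
    have := P5 γ i hi x hx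
    unfold lev
    constructor
    · linarith [hx.1]
    · linarith [hx.2]
  · rintro ⟨hy1, hy2⟩
    refine ⟨base γ + (y - lev T base γ i), ⟨by linarith, by linarith⟩, ?_⟩
    have := P5 γ i hi (base γ + (y - lev T base γ i)) ⟨by linarith, by linarith⟩
    unfold lev at *
    linarith

include P4 P5 hsub in
lemma level_sub_Iab (γ : Fin k) {i : ℕ} (hi : i ≤ h γ) :
    Set.Ico (lev T base γ i) (lev T base γ i + blen γ) ⊆ Set.Ico T.a T.b := by
  rw [← level_img P5 γ hi]
  rintro y ⟨x, hx, rfl⟩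
  exact IETAux.toFun_iter_mem T (hsub (base_sub_J P4 γ hx)) i

include P1 P4 P5 hsub in
lemma lev_add_le_b (γ : Fin k) {i : ℕ} (hi : i ≤ h γ) :
    lev T base γ i + blen γ ≤ T.b :=
  (ico_sub_bounds (P1 γ) (level_sub_Iab P4 P5 hsub γ hi)).2

end WithHyp

section WithHyp2

variable (P1 : ∀ γ, 0 < blen γ) (P2 : ∀ γ, 1 ≤ h γ)
  (P3 : Pairwise (Function.onFun Disjoint fun γ => Set.Ico (base γ) (base γ + blen γ)))
  (P4 : (⋃ γ, Set.Ico (base γ) (base γ + blen γ)) = Set.Ico aJ bJ)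
  (P5 : ∀ γ, ∀ i ≤ h γ, ∀ x ∈ Set.Ico (base γ) (base γ + blen γ),
    T.toFun^[i] x - T.toFun^[i] (base γ) = x - base γ)
  (P6 : ∀ γ, ∀ x ∈ Set.Ico (base γ) (base γ + blen γ),
    T.returnTime (Set.Ico aJ bJ) x = h γ)
  (P7 : (⋃ γ, ⋃ i ∈ Finset.range (h γ), T.toFun^[i] '' Set.Ico (base γ) (base γ + blen γ))
    = Set.Ico T.a T.b)
  (P8 : ∀ γ γ' : Fin k, ∀ i i' : ℕ, i < h γ → i' < h γ' → (γ, i) ≠ (γ', i') →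
    Disjoint (T.toFun^[i] '' Set.Ico (base γ) (base γ + blen γ))
      (T.toFun^[i'] '' Set.Ico (base γ') (base γ' + blen γ')))
  (hv : ∀ γ, 0 < v γ)
  (hvsum : ∑ γ, v γ * (h γ : ℝ) = T.b - T.a)
  (hsub : Set.Ico aJ bJ ⊆ Set.Ico T.a T.b)

/-- The base-side rescaling map. -/
noncomputable def PhiM (T : IET) (base blen : Fin k → ℝ) (h : Fin k → ℕ)
    (v : Fin k → ℝ) : ℝ → ℝ :=
  resc T.a (fun p : Idx h => lev T base p.1 (p.2 : ℕ)) (fun p => blen p.1)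
    (fun p => v p.1 / blen p.1)

/-- The image-side rescaling map. -/
noncomputable def PsiM (T : IET) (base blen : Fin k → ℝ) (h : Fin k → ℕ)
    (v : Fin k → ℝ) : ℝ → ℝ :=
  resc T.a (fun p : Idx h => lev T base p.1 ((p.2 : ℕ) + 1)) (fun p => blen p.1)
    (fun p => v p.1 / blen p.1)

include P1 hv in
lemma slp_pos : ∀ p : Idx h, 0 < v p.1 / blen p.1 :=
  fun p => div_pos (hv p.1) (P1 p.1)

include P1 hvsum in
lemma slp_sum : ∑ p : Idx h, (v p.1 / blen p.1) * blen p.1 = T.b - T.a := by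
  have e1 : ∀ p : Idx h, (v p.1 / blen p.1) * blen p.1 = v p.1 :=
    fun p => div_mul_cancel₀ (v p.1) (ne_of_gt (P1 p.1))
  rw [Finset.sum_congr rfl (fun p _ => e1 p), ← hvsum]
  rw [← Finset.univ_sigma_univ, Finset.sum_sigma]
  apply Finset.sum_congr rfl
  intro γ _
  simp [Finset.sum_const, Finset.card_univ, mul_comm]

include P1 P5 P8 in
lemma phi_disj : ∀ p q : Idx h, p ≠ q →
    lev T base p.1 (p.2 : ℕ) + blen p.1 ≤ lev T base q.1 (q.2 : ℕ) ∨
    lev T base q.1 (q.2 : ℕ) + blen q.1 ≤ lev T base p.1 (p.2 : ℕ) := by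
  intro p q hpq
  apply dichotomy_of_disjoint (P1 p.1) (P1 q.1)
  rw [← level_img P5 p.1 (le_of_lt p.2.isLt), ← level_img P5 q.1 (le_of_lt q.2.isLt)]
  exact P8 p.1 q.1 p.2 q.2 p.2.isLt q.2.isLt (idx_pair_ne hpq)

include P5 P7 in
lemma phi_cover : ∀ x, T.a ≤ x → x < T.b → ∃ p : Idx h,
    lev T base p.1 (p.2 : ℕ) ≤ x ∧ x < lev T base p.1 (p.2 : ℕ) + blen p.1 := by
  intro x hax hxb
  have : x ∈ (⋃ γ, ⋃ i ∈ Finset.range (h γ),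
      T.toFun^[i] '' Set.Ico (base γ) (base γ + blen γ)) := by
    rw [P7]; exact ⟨hax, hxb⟩
  rw [Set.mem_iUnion] at this
  obtain ⟨γ, hγ⟩ := this
  rw [Set.mem_iUnion₂] at hγ
  obtain ⟨i, hi, hx⟩ := hγ
  rw [Finset.mem_range] at hi
  rw [level_img P5 γ (le_of_lt hi)] at hx
  exact ⟨⟨γ, ⟨i, hi⟩⟩, hx.1, hx.2⟩

include P5 in
lemma psi_piece_img (p : Idx h) (hlt : (p.2 : ℕ) < h p.1) :
    Set.Ico (lev T base p.1 ((p.2 : ℕ) + 1)) (lev T base p.1 ((p.2 : ℕ) + 1) + blen p.1)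
      = T.toFun '' Set.Ico (lev T base p.1 (p.2 : ℕ)) (lev T base p.1 (p.2 : ℕ) + blen p.1) := by
  rw [← level_img P5 p.1 hlt, ← level_img P5 p.1 (le_of_lt hlt), ← Set.image_comp,
    ← Function.iterate_succ' T.toFun (p.2 : ℕ)]

include P1 P5 P8 in
lemma psi_disj : ∀ p q : Idx h, p ≠ q →
    lev T base p.1 ((p.2 : ℕ) + 1) + blen p.1 ≤ lev T base q.1 ((q.2 : ℕ) + 1) ∨
    lev T base q.1 ((q.2 : ℕ) + 1) + blen q.1 ≤ lev T base p.1 ((p.2 : ℕ) + 1) := by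
  intro p q hpq
  apply dichotomy_of_disjoint (P1 p.1) (P1 q.1)
  rw [psi_piece_img P5 p p.2.isLt, psi_piece_img P5 q q.2.isLt]
  apply Set.disjoint_image_of_injective (IETAux.toFun_injective T)
  rw [← level_img P5 p.1 (le_of_lt p.2.isLt), ← level_img P5 q.1 (le_of_lt q.2.isLt)]
  exact P8 p.1 q.1 p.2 q.2 p.2.isLt q.2.isLt (idx_pair_ne hpq)

include P5 P7 in
lemma psi_cover : ∀ x, T.a ≤ x → x < T.b → ∃ p : Idx h,
    lev T base p.1 ((p.2 : ℕ) + 1) ≤ x ∧ x < lev T base p.1 ((p.2 : ℕ) + 1) + blen p.1 := by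
  intro x hax hxb
  have hinv : T.invFun x ∈ Set.Ico T.a T.b := IETAux.invFun_mem T ⟨hax, hxb⟩
  obtain ⟨p, hp⟩ := phi_cover P5 P7 (T.invFun x) hinv.1 hinv.2
  refine ⟨p, ?_⟩
  have : x ∈ Set.Ico (lev T base p.1 ((p.2 : ℕ) + 1))
      (lev T base p.1 ((p.2 : ℕ) + 1) + blen p.1) := by
    rw [psi_piece_img P5 p p.2.isLt]
    exact ⟨T.invFun x, hp, IETAux.toFun_invFun T x⟩
  exact ⟨this.1, this.2⟩

include P1 P4 P5 hsub in
lemma psi_wb (p : Idx h) : lev T base p.1 ((p.2 : ℕ) + 1) + blen p.1 ≤ T.b :=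
  lev_add_le_b P1 P4 P5 hsub p.1 (Nat.succ_le_of_lt p.2.isLt)

lemma finRotate_val {n : ℕ} (i : Fin n) :
    ((finRotate n i : Fin n) : ℕ) = if (i : ℕ) + 1 = n then 0 else (i : ℕ) + 1 := by
  match n with
  | 0 => exact i.elim0
  | n + 1 =>
    rw [finRotate_succ_apply, Fin.val_add_one]
    by_cases hl : i = Fin.last n
    · subst hl
      rw [if_pos rfl, if_pos]
      simp
    · rw [if_neg hl, if_neg]
      intro hc
      exact hl (Fin.ext (by simpa using Nat.succ_injective hc))

include P1 P4 hv hsub in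
lemma Phi_left : PhiM T base blen h v T.a = T.a := by
  unfold PhiM
  exact resc_left (w := fun p : Idx h => lev T base p.1 (p.2 : ℕ)) (ℓ := fun p : Idx h => blen p.1) (s := fun p : Idx h => v p.1 / blen p.1) (fun p => P1 p.1) (fun p => (lev_mem P1 P4 hsub p.1 p.2).1)

include P1 P4 P5 hvsum hsub in
lemma Phi_right : PhiM T base blen h v T.b = T.b := by
  unfold PhiM
  exact resc_right (w := fun p : Idx h => lev T base p.1 (p.2 : ℕ)) (ℓ := fun p : Idx h => blen p.1) (s := fun p : Idx h => v p.1 / blen p.1) (fun p => lev_add_le_b P1 P4 P5 hsub p.1 (le_of_lt p.2.isLt))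
    (fun p => P1 p.1) (slp_sum P1 hvsum)

include P1 hv in
lemma Phi_mono {x y : ℝ} (hxy : x ≤ y) :
    PhiM T base blen h v x ≤ PhiM T base blen h v y := by
  unfold PhiM
  exact resc_mono (w := fun p : Idx h => lev T base p.1 (p.2 : ℕ)) (ℓ := fun p : Idx h => blen p.1) (s := fun p : Idx h => v p.1 / blen p.1) (fun p => le_of_lt (slp_pos P1 hv p)) hxy

include P1 P5 P7 hv in
lemma Phi_strict {x y : ℝ} (hax : T.a ≤ x) (hxy : x < y) (hyb : y ≤ T.b) :
    PhiM T base blen h v x < PhiM T base blen h v y := by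
  unfold PhiM
  exact resc_strict (w := fun p : Idx h => lev T base p.1 (p.2 : ℕ)) (ℓ := fun p : Idx h => blen p.1) (s := fun p : Idx h => v p.1 / blen p.1) (fun p => P1 p.1) (slp_pos P1 hv) (phi_cover P5 P7) hax hxy hyb

include P1 P5 P8 in
lemma Phi_piece (p : Idx h) {x : ℝ} (h1 : lev T base p.1 (p.2 : ℕ) ≤ x)
    (h2 : x ≤ lev T base p.1 (p.2 : ℕ) + blen p.1) :
    PhiM T base blen h v x
      = PhiM T base blen h v (lev T base p.1 (p.2 : ℕ)) + (v p.1 / blen p.1) * (x - lev T base p.1 (p.2 : ℕ)) := by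
  unfold PhiM
  exact resc_piece (w := fun p : Idx h => lev T base p.1 (p.2 : ℕ)) (ℓ := fun p : Idx h => blen p.1) (s := fun p : Idx h => v p.1 / blen p.1) (i := p) (fun p => P1 p.1) (phi_disj P1 P5 P8) h1 h2

include P1 P4 P5 P7 P8 hv hvsum hsub in
lemma Phi_image {u z : ℝ} (hau : T.a ≤ u) (hzb : z ≤ T.b) :
    PhiM T base blen h v '' Set.Ico u z
      = Set.Ico (PhiM T base blen h v u) (PhiM T base blen h v z) := by
  unfold PhiM
  exact resc_image (w := fun p : Idx h => lev T base p.1 (p.2 : ℕ)) (ℓ := fun p : Idx h => blen p.1) (s := fun p : Idx h => v p.1 / blen p.1) (fun p => P1 p.1) (slp_pos P1 hv)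
    (fun p => (lev_mem P1 P4 hsub p.1 p.2).1)
    (fun p => lev_add_le_b P1 P4 P5 hsub p.1 (le_of_lt p.2.isLt))
    (slp_sum P1 hvsum) (phi_cover P5 P7) hau hzb

include P1 P4 hv hsub in
lemma Psi_left : PsiM T base blen h v T.a = T.a := by
  unfold PsiM
  exact resc_left (w := fun p : Idx h => lev T base p.1 ((p.2 : ℕ) + 1)) (ℓ := fun p : Idx h => blen p.1) (s := fun p : Idx h => v p.1 / blen p.1) (fun p => P1 p.1) (fun p => (lev_mem P1 P4 hsub p.1 ((p.2 : ℕ) + 1)).1)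

include P1 P4 P5 hvsum hsub in
lemma Psi_right : PsiM T base blen h v T.b = T.b := by
  unfold PsiM
  exact resc_right (w := fun p : Idx h => lev T base p.1 ((p.2 : ℕ) + 1)) (ℓ := fun p : Idx h => blen p.1) (s := fun p : Idx h => v p.1 / blen p.1) (psi_wb P1 P4 P5 hsub) (fun p => P1 p.1) (slp_sum P1 hvsum)

include P1 hv in
lemma Psi_mono {x y : ℝ} (hxy : x ≤ y) :
    PsiM T base blen h v x ≤ PsiM T base blen h v y := by
  unfold PsiM
  exact resc_mono (w := fun p : Idx h => lev T base p.1 ((p.2 : ℕ) + 1)) (ℓ := fun p : Idx h => blen p.1) (s := fun p : Idx h => v p.1 / blen p.1) (fun p => le_of_lt (slp_pos P1 hv p)) hxy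

include P1 P5 P7 hv in
lemma Psi_strict {x y : ℝ} (hax : T.a ≤ x) (hxy : x < y) (hyb : y ≤ T.b) :
    PsiM T base blen h v x < PsiM T base blen h v y := by
  unfold PsiM
  exact resc_strict (w := fun p : Idx h => lev T base p.1 ((p.2 : ℕ) + 1)) (ℓ := fun p : Idx h => blen p.1) (s := fun p : Idx h => v p.1 / blen p.1) (fun p => P1 p.1) (slp_pos P1 hv) (psi_cover P5 P7) hax hxy hyb

include P1 P5 P8 in
lemma Psi_piece (p : Idx h) {x : ℝ} (h1 : lev T base p.1 ((p.2 : ℕ) + 1) ≤ x)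
    (h2 : x ≤ lev T base p.1 ((p.2 : ℕ) + 1) + blen p.1) :
    PsiM T base blen h v x
      = PsiM T base blen h v (lev T base p.1 ((p.2 : ℕ) + 1))
        + (v p.1 / blen p.1) * (x - lev T base p.1 ((p.2 : ℕ) + 1)) := by
  unfold PsiM
  exact resc_piece (w := fun p : Idx h => lev T base p.1 ((p.2 : ℕ) + 1)) (ℓ := fun p : Idx h => blen p.1) (s := fun p : Idx h => v p.1 / blen p.1) (i := p) (fun p => P1 p.1) (psi_disj P1 P5 P8) h1 h2

include P2 P6 in
lemma ret_mem (γ : Fin k) {x : ℝ} (hx : x ∈ Set.Ico (base γ) (base γ + blen γ)) :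
    T.toFun^[h γ] x ∈ Set.Ico aJ bJ := by
  have h6 := P6 γ x hx
  unfold IET.returnTime at h6
  have hne : {n : ℕ | 1 ≤ n ∧ T.toFun^[n] x ∈ Set.Ico aJ bJ}.Nonempty := by
    by_contra h0
    rw [Set.not_nonempty_iff_eq_empty] at h0
    rw [h0, Nat.sInf_empty] at h6
    have := P2 γ
    omega
  have hmem := Nat.sInf_mem hne
  rw [h6] at hmem
  exact hmem.2

include P2 P5 P6 in
lemma spiece_sub_J (γ : Fin k) :
    Set.Ico (lev T base γ (h γ)) (lev T base γ (h γ) + blen γ) ⊆ Set.Ico aJ bJ := by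
  rw [← level_img P5 γ le_rfl]
  rintro y ⟨x, hx, rfl⟩
  exact ret_mem P2 P6 γ hx

include P2 P4 P5 P8 in
lemma level_not_mem_J (γ : Fin k) {i : ℕ} (h1 : 1 ≤ i) (h2 : i < h γ) {x : ℝ}
    (hx : x ∈ Set.Ico (lev T base γ i) (lev T base γ i + blen γ)) :
    x ∉ Set.Ico aJ bJ := by
  intro hxJ
  rw [← P4, Set.mem_iUnion] at hxJ
  obtain ⟨γ', hγ'⟩ := hxJ
  have hd := P8 γ γ' i 0 h2 (P2 γ') (by
    intro hc
    rw [Prod.mk.injEq] at hc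
    omega)
  rw [level_img P5 γ (le_of_lt h2)] at hd
  simp only [Function.iterate_zero, Set.image_id] at hd
  exact Set.disjoint_left.mp hd hx hγ'

include P1 P2 P4 P5 P6 hsub in
lemma cons_eq {w : ℝ} (hw : w ≤ aJ ∨ bJ ≤ w) :
    PhiM T base blen h v w = PsiM T base blen h v w := by
  unfold PhiM PsiM resc
  congr 1
  refine (Fintype.sum_equiv (Equiv.sigmaCongrRight (fun γ => finRotate (h γ)))
    (fun p => (v p.1 / blen p.1) *
      (min (max w (lev T base p.1 ((p.2 : ℕ) + 1))) (lev T base p.1 ((p.2 : ℕ) + 1) + blen p.1)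
        - lev T base p.1 ((p.2 : ℕ) + 1)))
    (fun p => (v p.1 / blen p.1) *
      (min (max w (lev T base p.1 (p.2 : ℕ))) (lev T base p.1 (p.2 : ℕ) + blen p.1)
        - lev T base p.1 (p.2 : ℕ))) ?_).symm
  intro p
  obtain ⟨γ, i⟩ := p
  simp only [Equiv.sigmaCongrRight_apply]
  rw [show ((Equiv.sigmaCongrRight fun γ => finRotate (h γ)) ⟨γ, i⟩).snd = finRotate (h γ) i from rfl,
    finRotate_val]
  by_cases hc : (i : ℕ) + 1 = h γ
  · rw [if_pos hc, hc]
    have hb1 := ico_sub_bounds (P1 γ) (base_sub_J P4 γ)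
    have hb2 := ico_sub_bounds (P1 γ) (spiece_sub_J P2 P5 P6 γ)
    have hbase : lev T base γ 0 = base γ := rfl
    rw [hbase]
    rcases hw with hw | hw
    · rw [max_eq_right (by linarith [hb1.1]), max_eq_right (by linarith [hb2.1]),
        min_eq_left (by linarith [P1 γ]), min_eq_left (by linarith [P1 γ])]
      ring
    · rw [max_eq_left (by linarith [hb1.2, P1 γ]), max_eq_left (by linarith [hb2.2, P1 γ]),
        min_eq_right (by linarith [hb1.2]), min_eq_right (by linarith [hb2.2])]
      ring
  · rw [if_neg hc]

include P5 in
lemma toFun_level (p : Idx h) {x : ℝ} (h1 : lev T base p.1 (p.2 : ℕ) ≤ x)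
    (h2 : x < lev T base p.1 (p.2 : ℕ) + blen p.1) :
    T.toFun x = lev T base p.1 ((p.2 : ℕ) + 1) + (x - lev T base p.1 (p.2 : ℕ)) := by
  have hx : x ∈ T.toFun^[(p.2 : ℕ)] '' Set.Ico (base p.1) (base p.1 + blen p.1) := by
    rw [level_img P5 p.1 (le_of_lt p.2.isLt)]
    exact ⟨h1, h2⟩
  obtain ⟨xo, hxo, rfl⟩ := hx
  rw [← Function.iterate_succ_apply' T.toFun]
  have e1 := P5 p.1 ((p.2 : ℕ) + 1) p.2.isLt xo hxo
  have e2 := P5 p.1 (p.2 : ℕ) (le_of_lt p.2.isLt) xo hxo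
  unfold lev
  linarith

include P1 P5 P7 P8 in
lemma claimB (α : Fin T.d) {x : ℝ}
    (hx : x ∈ Set.Ico (T.lep α) (T.lep α + T.len α)) :
    PsiM T base blen h v (x + T.transl α)
      = PhiM T base blen h v x
        + (PsiM T base blen h v (T.lepImg α) - PhiM T base blen h v (T.lep α)) := by
  set g : ℝ → ℝ := fun t => PsiM T base blen h v (t + T.transl α) - PhiM T base blen h v t
    with hg
  have hIab : ∀ y, y ∈ Set.Ico (T.lep α) (T.lep α + T.len α) → y ∈ Set.Ico T.a T.b :=
    fun y hy => IETAux.interval_subset T α hy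
  have hval : ∀ y ∈ Set.Ico (T.lep α) (T.lep α + T.len α),
      ∃ p : Idx h, g y = PsiM T base blen h v (lev T base p.1 ((p.2 : ℕ) + 1))
        - PhiM T base blen h v (lev T base p.1 (p.2 : ℕ)) := by
    intro y hy
    obtain ⟨p, hp1, hp2⟩ := phi_cover P5 P7 y (hIab y hy).1 (hIab y hy).2
    refine ⟨p, ?_⟩
    have htf2 : T.toFun y = y + T.transl α := IETAux.toFun_eq T hy
    have htf : y + T.transl α = lev T base p.1 ((p.2 : ℕ) + 1) + (y - lev T base p.1 (p.2 : ℕ)) := by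
      rw [← htf2]
      exact toFun_level P5 p hp1 hp2
    have e1 : PhiM T base blen h v y
        = PhiM T base blen h v (lev T base p.1 (p.2 : ℕ))
          + (v p.1 / blen p.1) * (y - lev T base p.1 (p.2 : ℕ)) :=
      Phi_piece P1 P5 P8 p hp1 (le_of_lt hp2)
    have e2 : PsiM T base blen h v (y + T.transl α)
        = PsiM T base blen h v (lev T base p.1 ((p.2 : ℕ) + 1))
          + (v p.1 / blen p.1) * (y - lev T base p.1 (p.2 : ℕ)) := by
      rw [htf]
      have := Psi_piece P1 P5 P8 (v := v) p
        (x := lev T base p.1 ((p.2 : ℕ) + 1) + (y - lev T base p.1 (p.2 : ℕ)))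
        (by linarith) (by linarith)
      rw [this]
      ring_nf
    rw [hg]
    simp only
    rw [e1, e2]
    ring
  have hcont : Continuous g := by
    apply Continuous.sub
    · exact resc_continuous.comp (continuous_id.add continuous_const)
    · exact resc_continuous
  have key : ∀ y z, y ∈ Set.Ico (T.lep α) (T.lep α + T.len α)
      → z ∈ Set.Ico (T.lep α) (T.lep α + T.len α) → y ≤ z → g y = g z := by
    intro y z hy hz hyz
    by_contra hne
    have hIcc : Set.Icc y z ⊆ Set.Ico (T.lep α) (T.lep α + T.len α) :=
      fun t ht => ⟨le_trans hy.1 ht.1, lt_of_le_of_lt ht.2 hz.2⟩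
    have himg : g '' Set.Icc y z ⊆ Set.range (fun p : Idx h =>
        PsiM T base blen h v (lev T base p.1 ((p.2 : ℕ) + 1))
          - PhiM T base blen h v (lev T base p.1 (p.2 : ℕ))) := by
      rintro _ ⟨t, ht, rfl⟩
      obtain ⟨p, hp⟩ := hval t (hIcc ht)
      exact ⟨p, hp.symm⟩
    have hsub2 : Set.uIcc (g y) (g z) ⊆ g '' Set.Icc y z := by
      have := intermediate_value_uIcc (a := y) (b := z) (f := g) hcont.continuousOn
      rw [Set.uIcc_of_le hyz] at this
      exact this
    have hinf : (Set.uIcc (g y) (g z)).Infinite := by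
      rw [Set.uIcc]
      exact Set.Icc_infinite (min_lt_max.mpr hne)
    exact hinf (((Set.finite_range _).subset himg).subset hsub2)
  have hlep : T.lep α ∈ Set.Ico (T.lep α) (T.lep α + T.len α) :=
    ⟨le_rfl, by linarith [T.len_pos α]⟩
  have hcst := key (T.lep α) x hlep hx hx.1
  have harg : T.lep α + T.transl α = T.lepImg α := by
    unfold IET.transl
    ring
  have e3 := hcst.symm
  simp only [hg] at e3
  rw [harg] at e3
  linarith [e3]

/-- The new length vector. -/
noncomputable def lenNew (T : IET) {k : ℕ} (base blen : Fin k → ℝ) (h : Fin k → ℕ)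
    (v : Fin k → ℝ) : Fin T.d → ℝ :=
  fun α => PhiM T base blen h v (T.lep α + T.len α) - PhiM T base blen h v (T.lep α)

include P1 P4 P5 P7 hv hsub in
lemma lenNew_pos : ∀ α, 0 < lenNew T base blen h v α := by
  intro α
  unfold lenNew
  have h1 : T.a ≤ T.lep α := a_le_gpos T T.perm0 α
  have h2 : T.lep α + T.len α ≤ T.b := gpos_add_len_le_b T T.perm0 α
  have := Phi_strict P1 P5 P7 hv (v := v) (base := base) h1
    (by linarith [T.len_pos α] : T.lep α < T.lep α + T.len α) h2
  linarith

include P1 P4 P5 P7 hv hvsum hsub in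
lemma lenNew_sum : ∑ α, lenNew T base blen h v α = T.b - T.a := by
  have ht := telescope T T.perm0 (PhiM T base blen h v)
  rw [Phi_right P1 P4 P5 hvsum hsub, Phi_left P1 P4 hv hsub] at ht
  exact ht

include P1 P4 P5 hv hsub in
lemma lepP (hp : ∀ α, 0 < lenNew T base blen h v α)
    (hq : ∑ α, lenNew T base blen h v α = T.b - T.a) (α : Fin T.d) :
    (T.replaceLen (lenNew T base blen h v) hp hq).lep α
      = PhiM T base blen h v (T.lep α) := by
  have ht := telescope_partial T T.perm0 (PhiM T base blen h v) α
  rw [Phi_left P1 P4 hv hsub] at ht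
  show T.a + ∑ β ∈ Finset.univ.filter (fun β => T.perm0 β < T.perm0 α),
    lenNew T base blen h v β = PhiM T base blen h v (T.lep α)
  have hsum : ∑ β ∈ Finset.univ.filter (fun β => T.perm0 β < T.perm0 α),
      lenNew T base blen h v β
      = ∑ β ∈ Finset.univ.filter (fun β => T.perm0 β < T.perm0 α),
        (PhiM T base blen h v (gpos T T.perm0 β + T.len β)
          - PhiM T base blen h v (gpos T T.perm0 β)) :=
    Finset.sum_congr rfl (fun β _ => rfl)
  rw [hsum, ht]
  have hgl : T.lep α = gpos T T.perm0 α := rfl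
  rw [hgl]
  ring

include P1 P5 P7 P8 in
lemma lenNew_img (β : Fin T.d) :
    PsiM T base blen h v (T.lepImg β + T.len β) - PsiM T base blen h v (T.lepImg β)
      = lenNew T base blen h v β := by
  have heq : Set.EqOn (fun t => PsiM T base blen h v (t + T.transl β))
      (fun t => PhiM T base blen h v t
        + (PsiM T base blen h v (T.lepImg β) - PhiM T base blen h v (T.lep β)))
      (Set.Ico (T.lep β) (T.lep β + T.len β)) :=
    fun t ht => claimB P1 P5 P7 P8 β ht
  have hc1 : Continuous (fun t => PsiM T base blen h v (t + T.transl β)) :=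
    resc_continuous.comp (continuous_id.add continuous_const)
  have hc2 : Continuous (fun t => PhiM T base blen h v t
      + (PsiM T base blen h v (T.lepImg β) - PhiM T base blen h v (T.lep β))) :=
    resc_continuous.add continuous_const
  have hcl := heq.closure hc1 hc2
  have hne : T.lep β ≠ T.lep β + T.len β := by linarith [T.len_pos β]
  have hmem : T.lep β + T.len β ∈ closure (Set.Ico (T.lep β) (T.lep β + T.len β)) := by
    rw [closure_Ico hne]
    exact ⟨by linarith [T.len_pos β], le_rfl⟩
  have hval := hcl hmem
  simp only at hval
  have harg : T.lep β + T.len β + T.transl β = T.lepImg β + T.len β := by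
    unfold IET.transl
    ring
  rw [harg] at hval
  unfold lenNew
  linarith

include P1 P4 P5 P7 P8 hv hsub in
lemma lepImgP (hp : ∀ α, 0 < lenNew T base blen h v α)
    (hq : ∑ α, lenNew T base blen h v α = T.b - T.a) (α : Fin T.d) :
    (T.replaceLen (lenNew T base blen h v) hp hq).lepImg α
      = PsiM T base blen h v (T.lepImg α) := by
  have ht := telescope_partial T T.perm1 (PsiM T base blen h v) α
  rw [Psi_left P1 P4 hv hsub] at ht
  show T.a + ∑ β ∈ Finset.univ.filter (fun β => T.perm1 β < T.perm1 α),
    lenNew T base blen h v β = PsiM T base blen h v (T.lepImg α)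
  have hsum : ∑ β ∈ Finset.univ.filter (fun β => T.perm1 β < T.perm1 α),
      lenNew T base blen h v β
      = ∑ β ∈ Finset.univ.filter (fun β => T.perm1 β < T.perm1 α),
        (PsiM T base blen h v (gpos T T.perm1 β + T.len β)
          - PsiM T base blen h v (gpos T T.perm1 β)) := by
    apply Finset.sum_congr rfl
    intro β _
    rw [← lenNew_img P1 P5 P7 P8 β]
    rfl
  rw [hsum, ht]
  have hgl : T.lepImg α = gpos T T.perm1 α := rfl
  rw [hgl]
  ring

include P1 P4 P5 P7 P8 hv hsub in
lemma conjP (hp : ∀ α, 0 < lenNew T base blen h v α)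
    (hq : ∑ α, lenNew T base blen h v α = T.b - T.a) {x : ℝ}
    (hx : x ∈ Set.Ico T.a T.b) :
    (T.replaceLen (lenNew T base blen h v) hp hq).toFun (PhiM T base blen h v x)
      = PsiM T base blen h v (T.toFun x) := by
  obtain ⟨α, hα⟩ := gpos_cover T T.perm0 hx
  have hx' : x ∈ T.interval α := hα
  have hmem' : PhiM T base blen h v x
      ∈ (T.replaceLen (lenNew T base blen h v) hp hq).interval α := by
    constructor
    · rw [lepP P1 P4 P5 hv hsub hp hq]
      exact Phi_mono P1 hv hα.1
    · show PhiM T base blen h v x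
        < (T.replaceLen (lenNew T base blen h v) hp hq).lep α + lenNew T base blen h v α
      rw [lepP P1 P4 P5 hv hsub hp hq]
      have hstrict := Phi_strict P1 P5 P7 hv (v := v) (base := base)
        hx.1 hα.2 (gpos_add_len_le_b T T.perm0 α)
      unfold lenNew
      have : T.lep α = gpos T T.perm0 α := rfl
      rw [this]
      linarith
  rw [IETAux.toFun_eq (T.replaceLen (lenNew T base blen h v) hp hq) hmem']
  have htr : (T.replaceLen (lenNew T base blen h v) hp hq).transl α
      = PsiM T base blen h v (T.lepImg α) - PhiM T base blen h v (T.lep α) := by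
    unfold IET.transl
    rw [lepP P1 P4 P5 hv hsub hp hq, lepImgP P1 P4 P5 P7 P8 hv hsub hp hq]
  rw [htr, IETAux.toFun_eq T hx']
  exact (claimB P1 P5 P7 P8 α hx').symm

include P1 P2 P4 P5 P6 hsub in
lemma phipsi_not_mem {x : ℝ} (hx : x ∉ Set.Ico aJ bJ) :
    PhiM T base blen h v x = PsiM T base blen h v x := by
  apply cons_eq P1 P2 P4 P5 P6 hsub
  by_cases hc : x < aJ
  · exact Or.inl (le_of_lt hc)
  · push_neg at hc
    refine Or.inr ?_
    by_contra hc2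
    push_neg at hc2
    exact hx ⟨hc, hc2⟩

include P1 P2 P4 P5 P6 P7 P8 hv hsub in
lemma chainP (hp : ∀ α, 0 < lenNew T base blen h v α)
    (hq : ∑ α, lenNew T base blen h v α = T.b - T.a) {y : ℝ}
    (hy : y ∈ Set.Ico T.a T.b) (N : ℕ)
    (hav : ∀ j, 1 ≤ j → j ≤ N → T.toFun^[j] y ∉ Set.Ico aJ bJ) :
    (T.replaceLen (lenNew T base blen h v) hp hq).toFun^[N] (PhiM T base blen h v y)
      = PhiM T base blen h v (T.toFun^[N] y) := by
  induction N with
  | zero => rfl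
  | succ N ih =>
    rw [Function.iterate_succ_apply',
      ih (fun j hj1 hj2 => hav j hj1 (le_trans hj2 (Nat.le_succ N))),
      conjP P1 P4 P5 P7 P8 hv hsub hp hq (IETAux.toFun_iter_mem T hy N),
      Function.iterate_succ_apply' T.toFun]
    exact (phipsi_not_mem P1 P2 P4 P5 P6 hsub (by
      rw [← Function.iterate_succ_apply' T.toFun]
      exact hav (N + 1) (by omega) le_rfl)).symm

include P1 P2 P4 P5 P6 P7 P8 hv hsub in
lemma chainTower (hp : ∀ α, 0 < lenNew T base blen h v α)
    (hq : ∑ α, lenNew T base blen h v α = T.b - T.a) (γ : Fin k) {xo : ℝ}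
    (hxo : xo ∈ Set.Ico (base γ) (base γ + blen γ)) {i : ℕ} (hi : i < h γ) :
    (T.replaceLen (lenNew T base blen h v) hp hq).toFun^[i] (PhiM T base blen h v xo)
      = PhiM T base blen h v (T.toFun^[i] xo) := by
  apply chainP P1 P2 P4 P5 P6 P7 P8 hv hsub hp hq
    (hsub (base_sub_J P4 γ hxo))
  intro j hj1 hj2
  apply level_not_mem_J P2 P4 P5 P8 γ hj1 (lt_of_le_of_lt hj2 hi)
  rw [← level_img P5 γ (le_of_lt (lt_of_le_of_lt hj2 hi))]
  exact ⟨xo, hxo, rfl⟩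

include P1 P2 P4 P5 P6 P7 P8 hv hsub in
lemma topTower (hp : ∀ α, 0 < lenNew T base blen h v α)
    (hq : ∑ α, lenNew T base blen h v α = T.b - T.a) (γ : Fin k) {xo : ℝ}
    (hxo : xo ∈ Set.Ico (base γ) (base γ + blen γ)) :
    (T.replaceLen (lenNew T base blen h v) hp hq).toFun^[h γ] (PhiM T base blen h v xo)
      = PsiM T base blen h v (T.toFun^[h γ] xo) := by
  obtain ⟨t, ht⟩ : ∃ t, h γ = t + 1 := ⟨h γ - 1, by have := P2 γ; omega⟩
  rw [ht, Function.iterate_succ_apply',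
    chainTower P1 P2 P4 P5 P6 P7 P8 hv hsub hp hq γ hxo (by omega),
    conjP P1 P4 P5 P7 P8 hv hsub hp hq (IETAux.toFun_iter_mem T (hsub (base_sub_J P4 γ hxo)) t),
    Function.iterate_succ_apply' T.toFun]

end WithHyp2

end Tower

end IETAux

/-- the unwinding proposition.  Given an ergodic IET `T`, a subinterval `J`
of form (★) disjoint from all connections, with associated Rokhlin tower decomposition,
and any new positive base-length vector `v` with `∑ v γ * h γ = |I|`, there is a new
length vector `len'` such that the IET `T̃ = (π, len')` induced on the interval `J̃` with
the corresponding endpoints has the same combinatorics, base lengths `v`, the same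
heights, and the same relative order of the tower bases, of their images, and of all the
tower levels. -/
theorem stmt7 (T : IET)
    (hErg : Ergodic T.toFun (volume.restrict (Set.Ico T.a T.b)))
    (aJ bJ : ℝ) (αJ βJ : Fin T.d) (m n : ℤ)
    (hlt : aJ < bJ) (hsub : Set.Ico aJ bJ ⊆ Set.Ico T.a T.b)
    (haJ : aJ = T.iter m (T.lep αJ)) (hbJ : bJ = T.iter n (T.lep βJ))
    (havoida : ∀ m' : ℤ, (0 ≤ m' ∧ m' ≤ m ∨ m ≤ m' ∧ m' ≤ 0) → m' ≠ m →
      T.iter m' (T.lep αJ) ∉ Set.Ico aJ bJ)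
    (havoidb : ∀ n' : ℤ, (0 ≤ n' ∧ n' ≤ n ∨ n ≤ n' ∧ n' ≤ 0) → n' ≠ n →
      T.iter n' (T.lep βJ) ∉ Set.Ico aJ bJ)
    (hconn : ∀ s, T.IsConnection s → Disjoint s (Set.Ico aJ bJ))
    (k : ℕ) (base blen : Fin k → ℝ) (h : Fin k → ℕ)
    (htower : T.IsTowerDecomp aJ bJ base blen h)
    (v : Fin k → ℝ) (hv : ∀ γ, 0 < v γ)
    (hvsum : ∑ γ, v γ * (h γ : ℝ) = T.b - T.a) :
    ∃ (len' : Fin T.d → ℝ) (h1 : ∀ α, 0 < len' α) (h2 : ∑ α, len' α = T.b - T.a)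
      (base' : Fin k → ℝ),
      (T.replaceLen len' h1 h2).IsTowerDecomp
        ((T.replaceLen len' h1 h2).iter m ((T.replaceLen len' h1 h2).lep αJ))
        ((T.replaceLen len' h1 h2).iter n ((T.replaceLen len' h1 h2).lep βJ))
        base' v h ∧
      (∀ γ γ' : Fin k, base γ < base γ' ↔ base' γ < base' γ') ∧
      (∀ γ γ' : Fin k,
        T.toFun^[h γ] (base γ) < T.toFun^[h γ'] (base γ') ↔
        (T.replaceLen len' h1 h2).toFun^[h γ] (base' γ)
          < (T.replaceLen len' h1 h2).toFun^[h γ'] (base' γ')) ∧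
      (∀ γ γ' : Fin k, ∀ i i' : ℕ, i < h γ → i' < h γ' →
        (T.toFun^[i] (base γ) < T.toFun^[i'] (base γ') ↔
         (T.replaceLen len' h1 h2).toFun^[i] (base' γ)
           < (T.replaceLen len' h1 h2).toFun^[i'] (base' γ'))) := by
  classical
  obtain ⟨P1, P2, P3, P4, P5, P6, P7, P8⟩ := htower
  have hp := IETAux.lenNew_pos (v := v) P1 P4 P5 P7 hv hsub
  have hq := IETAux.lenNew_sum P1 P4 P5 P7 hv hvsum hsub
  -- basic membership facts
  have hbase_pt : ∀ γ, base γ ∈ Set.Ico (base γ) (base γ + blen γ) :=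
    fun γ => ⟨le_rfl, by linarith [P1 γ]⟩
  have hbase_ab : ∀ γ, base γ ∈ Set.Ico T.a T.b :=
    fun γ => hsub (IETAux.base_sub_J P4 γ (hbase_pt γ))
  have hlev_ab : ∀ γ (i : ℕ), T.toFun^[i] (base γ) ∈ Set.Ico T.a T.b :=
    fun γ i => IETAux.toFun_iter_mem T (hbase_ab γ) i
  -- order-reflection helpers
  have hord : ∀ {x y : ℝ}, x ∈ Set.Ico T.a T.b → y ∈ Set.Ico T.a T.b →
      (x < y ↔ IETAux.PhiM T base blen h v x < IETAux.PhiM T base blen h v y) := by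
    intro x y hx hy
    constructor
    · intro hxy
      exact IETAux.Phi_strict P1 P5 P7 hv hx.1 hxy (le_of_lt hy.2)
    · intro hxy
      by_contra hcon
      push_neg at hcon
      exact absurd (IETAux.Phi_mono P1 hv hcon) (not_le.mpr hxy)
  have hordPsi : ∀ {x y : ℝ}, x ∈ Set.Ico T.a T.b → y ∈ Set.Ico T.a T.b →
      (x < y ↔ IETAux.PsiM T base blen h v x < IETAux.PsiM T base blen h v y) := by
    intro x y hx hy
    constructor
    · intro hxy
      exact IETAux.Psi_strict P1 P5 P7 hv hx.1 hxy (le_of_lt hy.2)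
    · intro hxy
      by_contra hcon
      push_neg at hcon
      exact absurd (IETAux.Psi_mono P1 hv hcon) (not_le.mpr hxy)
  have hphiInj : ∀ {x y : ℝ}, x ∈ Set.Ico T.a T.b → y ∈ Set.Ico T.a T.b →
      IETAux.PhiM T base blen h v x = IETAux.PhiM T base blen h v y → x = y := by
    intro x y hx hy hxy
    rcases lt_trichotomy x y with hc | hc | hc
    · exact absurd ((hord hx hy).mp hc) (by rw [hxy]; exact lt_irrefl _)
    · exact hc
    · exact absurd ((hord hy hx).mp hc) (by rw [hxy]; exact lt_irrefl _)
  -- membership facts for the endpoints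
  have haJ_ab : aJ ∈ Set.Ico T.a T.b := hsub ⟨le_rfl, hlt⟩
  have hlep_ab : ∀ α, T.lep α ∈ Set.Ico T.a T.b := by
    intro α
    refine ⟨IETAux.a_le_gpos T T.perm0 α, ?_⟩
    have h1 := IETAux.gpos_add_len_le_b T T.perm0 α
    have h2 := T.len_pos α
    show T.lep α < T.b
    have h3 : T.lep α = IETAux.gpos T T.perm0 α := rfl
    rw [h3]
    linarith
  have hiter_mem : ∀ (nn : ℤ) (x : ℝ), x ∈ Set.Ico T.a T.b →
      T.iter nn x ∈ Set.Ico T.a T.b := by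
    intro nn x hx
    unfold IET.iter
    split
    · exact IETAux.toFun_iter_mem T hx _
    · exact IETAux.invFun_iter_mem T hx _
  have hbJ_ab : bJ ∈ Set.Ico T.a T.b := by
    rw [hbJ]
    exact hiter_mem n _ (hlep_ab βJ)
  have hPhiaJ_eq : IETAux.PhiM T base blen h v aJ = IETAux.PsiM T base blen h v aJ :=
    IETAux.cons_eq P1 P2 P4 P5 P6 hsub (Or.inl le_rfl)
  have hPhibJ_eq : IETAux.PhiM T base blen h v bJ = IETAux.PsiM T base blen h v bJ :=
    IETAux.cons_eq P1 P2 P4 P5 P6 hsub (Or.inr le_rfl)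
  have hlepP := IETAux.lepP P1 P4 P5 hv hsub hp hq
  -- endpoint identity for aJ
  have hEA : (T.replaceLen (IETAux.lenNew T base blen h v) hp hq).iter m ((T.replaceLen (IETAux.lenNew T base blen h v) hp hq).lep αJ) = IETAux.PhiM T base blen h v aJ := by
    rcases le_or_gt 0 m with hm | hm
    · set M := m.toNat with hM
      have haJ' : aJ = T.toFun^[M] (T.lep αJ) := by
        rw [haJ]
        unfold IET.iter
        rw [if_pos hm]
      have hiter : (T.replaceLen (IETAux.lenNew T base blen h v) hp hq).iter m ((T.replaceLen (IETAux.lenNew T base blen h v) hp hq).lep αJ)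
          = (T.replaceLen (IETAux.lenNew T base blen h v) hp hq).toFun^[M] (IETAux.PhiM T base blen h v (T.lep αJ)) := by
        unfold IET.iter
        rw [if_pos hm, hlepP αJ]
      rw [hiter]
      rcases Nat.eq_zero_or_pos M with hM0 | hM1
      · rw [hM0] at haJ' ⊢
        simp only [Function.iterate_zero_apply] at haJ' ⊢
        rw [← haJ']
      · obtain ⟨M', hM'⟩ : ∃ M', M = M' + 1 := ⟨M - 1, by omega⟩
        have hav : ∀ j, 1 ≤ j → j ≤ M' → T.toFun^[j] (T.lep αJ) ∉ Set.Ico aJ bJ := by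
          intro j hj1 hj2
          have hj3 : ((j : ℤ)) ≠ m := by omega
          have hmem := havoida (j : ℤ) (Or.inl ⟨by omega, by omega⟩) hj3
          have hiterj : T.iter (j : ℤ) (T.lep αJ) = T.toFun^[j] (T.lep αJ) := by
            unfold IET.iter
            rw [if_pos (Int.natCast_nonneg j)]
            norm_num
          rwa [hiterj] at hmem
        have hch := IETAux.chainP P1 P2 P4 P5 P6 P7 P8 hv hsub hp hq (hlep_ab αJ) M' hav
        have haJ'' : aJ = T.toFun (T.toFun^[M'] (T.lep αJ)) := by
          rw [haJ', hM', Function.iterate_succ_apply']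
        rw [hM', Function.iterate_succ_apply', hch,
          IETAux.conjP P1 P4 P5 P7 P8 hv hsub hp hq (IETAux.toFun_iter_mem T (hlep_ab αJ) M'),
          ← haJ'', ← hPhiaJ_eq]
    · set M := (-m).toNat with hM
      have hM1 : 1 ≤ M := by omega
      have haJ' : aJ = T.invFun^[M] (T.lep αJ) := by
        rw [haJ]
        unfold IET.iter
        rw [if_neg (not_le.mpr hm)]
      have hlep' : T.lep αJ = T.toFun^[M] aJ := by
        rw [haJ', IETAux.toFun_invFun_iter T M]
      have hav : ∀ j, 1 ≤ j → j ≤ M → T.toFun^[j] aJ ∉ Set.Ico aJ bJ := by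
        intro j hj1 hj2
        have hne : (m + (j : ℤ)) ≠ m := by omega
        have hmem := havoida (m + j) (Or.inr ⟨by omega, by omega⟩) hne
        have hiterval : T.iter (m + (j : ℤ)) (T.lep αJ) = T.toFun^[j] aJ := by
          by_cases hjM : j = M
          · have hz : m + (j : ℤ) = 0 := by omega
            rw [hz]
            unfold IET.iter
            rw [if_pos le_rfl]
            simp only [Int.toNat_zero, Function.iterate_zero_apply]
            rw [hlep', hjM]
          · have hneg : ¬ (0 ≤ m + (j : ℤ)) := by omega
            unfold IET.iter
            rw [if_neg hneg]
            have htn : (-(m + (j : ℤ))).toNat = M - j := by omega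
            have e1 : T.toFun^[M] aJ = T.toFun^[M - j] (T.toFun^[j] aJ) := by
              rw [← Function.iterate_add_apply]
              congr 1
              omega
            rw [htn, hlep', e1, IETAux.invFun_toFun_iter]
        rwa [hiterval] at hmem
      have hch := IETAux.chainP P1 P2 P4 P5 P6 P7 P8 hv hsub hp hq haJ_ab M hav
      rw [← hlep'] at hch
      have hrw : (T.replaceLen (IETAux.lenNew T base blen h v) hp hq).iter m ((T.replaceLen (IETAux.lenNew T base blen h v) hp hq).lep αJ)
          = (T.replaceLen (IETAux.lenNew T base blen h v) hp hq).invFun^[M] ((T.replaceLen (IETAux.lenNew T base blen h v) hp hq).toFun^[M] (IETAux.PhiM T base blen h v aJ)) := by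
        unfold IET.iter
        rw [if_neg (not_le.mpr hm), hlepP αJ, ← hch]
      rw [hrw, IETAux.invFun_toFun_iter]
  -- endpoint identity for bJ
  have hEB : (T.replaceLen (IETAux.lenNew T base blen h v) hp hq).iter n ((T.replaceLen (IETAux.lenNew T base blen h v) hp hq).lep βJ) = IETAux.PhiM T base blen h v bJ := by
    rcases le_or_gt 0 n with hn | hn
    · set N := n.toNat with hN
      have hbJ' : bJ = T.toFun^[N] (T.lep βJ) := by
        rw [hbJ]
        unfold IET.iter
        rw [if_pos hn]
      have hiter : (T.replaceLen (IETAux.lenNew T base blen h v) hp hq).iter n ((T.replaceLen (IETAux.lenNew T base blen h v) hp hq).lep βJ)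
          = (T.replaceLen (IETAux.lenNew T base blen h v) hp hq).toFun^[N] (IETAux.PhiM T base blen h v (T.lep βJ)) := by
        unfold IET.iter
        rw [if_pos hn, hlepP βJ]
      have hav : ∀ j, 1 ≤ j → j ≤ N → T.toFun^[j] (T.lep βJ) ∉ Set.Ico aJ bJ := by
        intro j hj1 hj2
        by_cases hjN : j = N
        · rw [hjN, ← hbJ']
          intro hc
          exact absurd hc.2 (lt_irrefl bJ)
        · have hj3 : ((j : ℤ)) ≠ n := by omega
          have hmem := havoidb (j : ℤ) (Or.inl ⟨by omega, by omega⟩) hj3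
          have hiterj : T.iter (j : ℤ) (T.lep βJ) = T.toFun^[j] (T.lep βJ) := by
            unfold IET.iter
            rw [if_pos (Int.natCast_nonneg j)]
            norm_num
          rwa [hiterj] at hmem
      rw [hiter, IETAux.chainP P1 P2 P4 P5 P6 P7 P8 hv hsub hp hq (hlep_ab βJ) N hav, ← hbJ']
    · set N := (-n).toNat with hN
      have hN1 : 1 ≤ N := by omega
      have hbJ' : bJ = T.invFun^[N] (T.lep βJ) := by
        rw [hbJ]
        unfold IET.iter
        rw [if_neg (not_le.mpr hn)]
      have hlep' : T.lep βJ = T.toFun^[N] bJ := by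
        rw [hbJ', IETAux.toFun_invFun_iter T N]
      have hav : ∀ j, 1 ≤ j → j ≤ N → T.toFun^[j] bJ ∉ Set.Ico aJ bJ := by
        intro j hj1 hj2
        have hne : (n + (j : ℤ)) ≠ n := by omega
        have hmem := havoidb (n + j) (Or.inr ⟨by omega, by omega⟩) hne
        have hiterval : T.iter (n + (j : ℤ)) (T.lep βJ) = T.toFun^[j] bJ := by
          by_cases hjN : j = N
          · have hz : n + (j : ℤ) = 0 := by omega
            rw [hz]
            unfold IET.iter
            rw [if_pos le_rfl]
            simp only [Int.toNat_zero, Function.iterate_zero_apply]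
            rw [hlep', hjN]
          · have hneg : ¬ (0 ≤ n + (j : ℤ)) := by omega
            unfold IET.iter
            rw [if_neg hneg]
            have htn : (-(n + (j : ℤ))).toNat = N - j := by omega
            have e1 : T.toFun^[N] bJ = T.toFun^[N - j] (T.toFun^[j] bJ) := by
              rw [← Function.iterate_add_apply]
              congr 1
              omega
            rw [htn, hlep', e1, IETAux.invFun_toFun_iter]
        rwa [hiterval] at hmem
      have hch := IETAux.chainP P1 P2 P4 P5 P6 P7 P8 hv hsub hp hq hbJ_ab N hav
      rw [← hlep'] at hch
      have hrw : (T.replaceLen (IETAux.lenNew T base blen h v) hp hq).iter n ((T.replaceLen (IETAux.lenNew T base blen h v) hp hq).lep βJ)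
          = (T.replaceLen (IETAux.lenNew T base blen h v) hp hq).invFun^[N] ((T.replaceLen (IETAux.lenNew T base blen h v) hp hq).toFun^[N] (IETAux.PhiM T base blen h v bJ)) := by
        unfold IET.iter
        rw [if_neg (not_le.mpr hn), hlepP βJ, ← hch]
      rw [hrw, IETAux.invFun_toFun_iter]
  -- image of a base under Phi
  have hvslope : ∀ γ, IETAux.PhiM T base blen h v (base γ + blen γ) = IETAux.PhiM T base blen h v (base γ) + v γ := by
    intro γ
    have hlev0 : IETAux.lev T base γ ((((⟨0, P2 γ⟩ : Fin (h γ))) : ℕ)) = base γ := rfl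
    have hpiece := IETAux.Phi_piece P1 P5 P8 (v := v) (⟨γ, ⟨0, P2 γ⟩⟩ : IETAux.Idx h)
      (x := base γ + blen γ) (by rw [hlev0]; linarith [P1 γ]) (by rw [hlev0])
    rw [hlev0] at hpiece
    rw [hpiece, show base γ + blen γ - base γ = blen γ from by ring,
      div_mul_cancel₀ _ (ne_of_gt (P1 γ))]
  have hbase_le_b : ∀ γ, base γ + blen γ ≤ T.b := by
    intro γ
    have := IETAux.lev_add_le_b P1 P4 P5 hsub γ (Nat.zero_le (h γ))
    exact this
  have hbase_img : ∀ γ, IETAux.PhiM T base blen h v '' Set.Ico (base γ) (base γ + blen γ)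
      = Set.Ico (IETAux.PhiM T base blen h v (base γ)) (IETAux.PhiM T base blen h v (base γ) + v γ) := by
    intro γ
    rw [IETAux.Phi_image P1 P4 P5 P7 P8 hv hvsum hsub (hbase_ab γ).1 (hbase_le_b γ),
      hvslope γ]
  have hlev_img : ∀ γ (i : ℕ), i < h γ →
      (T.replaceLen (IETAux.lenNew T base blen h v) hp hq).toFun^[i] '' Set.Ico (IETAux.PhiM T base blen h v (base γ)) (IETAux.PhiM T base blen h v (base γ) + v γ)
        = IETAux.PhiM T base blen h v '' (T.toFun^[i] '' Set.Ico (base γ) (base γ + blen γ)) := by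
    intro γ i hi
    rw [← hbase_img γ, ← Set.image_comp, ← Set.image_comp]
    apply Set.image_congr
    intro xo hxo
    exact IETAux.chainTower P1 P2 P4 P5 P6 P7 P8 hv hsub hp hq γ hxo hi
  refine ⟨IETAux.lenNew T base blen h v, hp, hq, fun γ => IETAux.PhiM T base blen h v (base γ),
    ?_, ?_, ?_, ?_⟩
  · rw [hEA, hEB]
    refine ⟨hv, P2, ?_, ?_, ?_, ?_, ?_, ?_⟩
    · -- new bases pairwise disjoint
      intro γ γ' hne
      show Disjoint (Set.Ico (IETAux.PhiM T base blen h v (base γ)) (IETAux.PhiM T base blen h v (base γ) + v γ))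
        (Set.Ico (IETAux.PhiM T base blen h v (base γ')) (IETAux.PhiM T base blen h v (base γ') + v γ'))
      rw [← hbase_img γ, ← hbase_img γ', Set.disjoint_left]
      rintro _ ⟨x, hx, rfl⟩ ⟨y, hy, hxy⟩
      have hx' : x ∈ Set.Ico T.a T.b := hsub (IETAux.base_sub_J P4 γ hx)
      have hy' : y ∈ Set.Ico T.a T.b := hsub (IETAux.base_sub_J P4 γ' hy)
      have := hphiInj hy' hx' hxy
      rw [this] at hy
      exact Set.disjoint_left.mp (P3 hne) hx hy
    · -- new bases partition the new J
      calc (⋃ γ, Set.Ico (IETAux.PhiM T base blen h v (base γ)) (IETAux.PhiM T base blen h v (base γ) + v γ))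
          = ⋃ γ, IETAux.PhiM T base blen h v '' Set.Ico (base γ) (base γ + blen γ) := by
            exact Set.iUnion_congr (fun γ => (hbase_img γ).symm)
        _ = IETAux.PhiM T base blen h v '' (⋃ γ, Set.Ico (base γ) (base γ + blen γ)) := (Set.image_iUnion).symm
        _ = IETAux.PhiM T base blen h v '' Set.Ico aJ bJ := by rw [P4]
        _ = Set.Ico (IETAux.PhiM T base blen h v aJ) (IETAux.PhiM T base blen h v bJ) :=
            IETAux.Phi_image P1 P4 P5 P7 P8 hv hvsum hsub haJ_ab.1 (le_of_lt hbJ_ab.2)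
    · -- translation structure on the towers
      intro γ i hi x hx
      rw [show Set.Ico (IETAux.PhiM T base blen h v (base γ)) (IETAux.PhiM T base blen h v (base γ) + v γ)
        = IETAux.PhiM T base blen h v '' Set.Ico (base γ) (base γ + blen γ) from (hbase_img γ).symm] at hx
      obtain ⟨xo, hxo, rfl⟩ := hx
      rcases eq_or_lt_of_le hi with hieq | hilt
      · -- i = h γ
        subst hieq
        rw [IETAux.topTower P1 P2 P4 P5 P6 P7 P8 hv hsub hp hq γ hxo, IETAux.topTower P1 P2 P4 P5 P6 P7 P8 hv hsub hp hq γ (hbase_pt γ)]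
        have hP5top := P5 γ (h γ) le_rfl xo hxo
        have hlevtop : ∀ z, z ∈ Set.Ico (base γ) (base γ + blen γ) →
            T.toFun^[h γ] z = IETAux.lev T base γ (h γ) + (z - base γ) := by
          intro z hz
          have := P5 γ (h γ) le_rfl z hz
          unfold IETAux.lev
          linarith
        have hhγ : h γ - 1 < h γ := by
          have := P2 γ
          omega
        have hidx : (((⟨h γ - 1, hhγ⟩ : Fin (h γ)) : ℕ)) + 1 = h γ := by
          have := P2 γ
          simp only
          omega
        have hpsipiece : ∀ z, z ∈ Set.Ico (base γ) (base γ + blen γ) →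
            IETAux.PsiM T base blen h v (T.toFun^[h γ] z) = IETAux.PsiM T base blen h v (IETAux.lev T base γ (h γ))
              + (v γ / blen γ) * (z - base γ) := by
          intro z hz
          rw [hlevtop z hz]
          have hpp := IETAux.Psi_piece P1 P5 P8 (v := v)
            (⟨γ, ⟨h γ - 1, hhγ⟩⟩ : IETAux.Idx h)
            (x := IETAux.lev T base γ (h γ) + (z - base γ))
            (by rw [hidx]; linarith [hz.1]) (by rw [hidx]; linarith [hz.2])
          rw [hidx] at hpp
          rw [hpp]
          ring_nf
        rw [hpsipiece xo hxo, hpsipiece (base γ) (hbase_pt γ)]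
        have hphipiece : ∀ z, z ∈ Set.Ico (base γ) (base γ + blen γ) →
            IETAux.PhiM T base blen h v z = IETAux.PhiM T base blen h v (base γ) + (v γ / blen γ) * (z - base γ) := by
          intro z hz
          have hpp := IETAux.Phi_piece P1 P5 P8 (v := v)
            (⟨γ, ⟨0, P2 γ⟩⟩ : IETAux.Idx h) (x := z)
            (by show base γ ≤ z; exact hz.1) (by show z ≤ base γ + blen γ; linarith [hz.2])
          exact hpp
        rw [hphipiece xo hxo]
        ring
      · -- i < h γ
        rw [IETAux.chainTower P1 P2 P4 P5 P6 P7 P8 hv hsub hp hq γ hxo hilt, IETAux.chainTower P1 P2 P4 P5 P6 P7 P8 hv hsub hp hq γ (hbase_pt γ) hilt]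
        have hlevi : ∀ z, z ∈ Set.Ico (base γ) (base γ + blen γ) →
            T.toFun^[i] z = IETAux.lev T base γ i + (z - base γ) := by
          intro z hz
          have := P5 γ i (le_of_lt hilt) z hz
          unfold IETAux.lev
          linarith
        have hphipiecei : ∀ z, z ∈ Set.Ico (base γ) (base γ + blen γ) →
            IETAux.PhiM T base blen h v (T.toFun^[i] z) = IETAux.PhiM T base blen h v (IETAux.lev T base γ i)
              + (v γ / blen γ) * (z - base γ) := by
          intro z hz
          rw [hlevi z hz]
          have hpp := IETAux.Phi_piece P1 P5 P8 (v := v)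
            (⟨γ, ⟨i, hilt⟩⟩ : IETAux.Idx h)
            (x := IETAux.lev T base γ i + (z - base γ))
            (by show IETAux.lev T base γ i ≤ _; linarith [hz.1])
            (by show _ ≤ IETAux.lev T base γ i + blen γ; linarith [hz.2])
          rw [hpp]
          ring_nf
        rw [hphipiecei xo hxo, hphipiecei (base γ) (hbase_pt γ)]
        have hphipiece : ∀ z, z ∈ Set.Ico (base γ) (base γ + blen γ) →
            IETAux.PhiM T base blen h v z = IETAux.PhiM T base blen h v (base γ) + (v γ / blen γ) * (z - base γ) := by
          intro z hz
          exact IETAux.Phi_piece P1 P5 P8 (v := v)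
            (⟨γ, ⟨0, P2 γ⟩⟩ : IETAux.Idx h) (x := z)
            (by show base γ ≤ z; exact hz.1) (by show z ≤ base γ + blen γ; linarith [hz.2])
        rw [hphipiece xo hxo]
        ring
    · -- return times
      intro γ x hx
      rw [show Set.Ico (IETAux.PhiM T base blen h v (base γ)) (IETAux.PhiM T base blen h v (base γ) + v γ)
        = IETAux.PhiM T base blen h v '' Set.Ico (base γ) (base γ + blen γ) from (hbase_img γ).symm] at hx
      obtain ⟨xo, hxo, rfl⟩ := hx
      have hretJ := IETAux.ret_mem P2 P6 γ hxo
      have hmemS : h γ ∈ {n : ℕ | 1 ≤ n ∧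
          (T.replaceLen (IETAux.lenNew T base blen h v) hp hq).toFun^[n] (IETAux.PhiM T base blen h v xo) ∈ Set.Ico (IETAux.PhiM T base blen h v aJ) (IETAux.PhiM T base blen h v bJ)} := by
        refine ⟨P2 γ, ?_⟩
        rw [IETAux.topTower P1 P2 P4 P5 P6 P7 P8 hv hsub hp hq γ hxo]
        constructor
        · rw [hPhiaJ_eq]
          exact IETAux.Psi_mono P1 hv hretJ.1
        · rw [hPhibJ_eq]
          exact IETAux.Psi_strict P1 P5 P7 hv (hsub hretJ).1 hretJ.2 (le_of_lt hbJ_ab.2)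
      show sInf _ = h γ
      apply le_antisymm
      · exact Nat.sInf_le hmemS
      · apply le_csInf ⟨h γ, hmemS⟩
        intro j hj
        by_contra hcon
        push_neg at hcon
        obtain ⟨hj1, hj2⟩ := hj
        rw [IETAux.chainTower P1 P2 P4 P5 P6 P7 P8 hv hsub hp hq γ hxo hcon] at hj2
        have hOut : T.toFun^[j] xo ∉ Set.Ico aJ bJ := by
          apply IETAux.level_not_mem_J P2 P4 P5 P8 γ hj1 hcon
          rw [← IETAux.level_img P5 γ (le_of_lt hcon)]
          exact ⟨xo, hxo, rfl⟩
        have hpt_ab : T.toFun^[j] xo ∈ Set.Ico T.a T.b :=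
          IETAux.toFun_iter_mem T (hsub (IETAux.base_sub_J P4 γ hxo)) j
        by_cases hcase : T.toFun^[j] xo < aJ
        · have := IETAux.Phi_strict P1 P5 P7 hv (v := v) hpt_ab.1 hcase (le_of_lt haJ_ab.2)
          linarith [hj2.1]
        · push_neg at hcase
          have hge : bJ ≤ T.toFun^[j] xo := by
            by_contra hcc
            push_neg at hcc
            exact hOut ⟨hcase, hcc⟩
          have := IETAux.Phi_mono (T := T) (base := base) (blen := blen) (h := h) (v := v) P1 hv hge
          linarith [hj2.2]
    · -- new levels partition I
      calc (⋃ γ, ⋃ i ∈ Finset.range (h γ),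
            (T.replaceLen (IETAux.lenNew T base blen h v) hp hq).toFun^[i] '' Set.Ico (IETAux.PhiM T base blen h v (base γ)) (IETAux.PhiM T base blen h v (base γ) + v γ))
          = ⋃ γ, ⋃ i ∈ Finset.range (h γ),
            IETAux.PhiM T base blen h v '' (T.toFun^[i] '' Set.Ico (base γ) (base γ + blen γ)) := by
            apply Set.iUnion_congr
            intro γ
            apply Set.iUnion₂_congr
            intro i hi
            exact hlev_img γ i (Finset.mem_range.mp hi)
        _ = IETAux.PhiM T base blen h v '' (⋃ γ, ⋃ i ∈ Finset.range (h γ),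
            T.toFun^[i] '' Set.Ico (base γ) (base γ + blen γ)) := by
            rw [Set.image_iUnion]
            apply Set.iUnion_congr
            intro γ
            rw [Set.image_iUnion₂]
        _ = IETAux.PhiM T base blen h v '' Set.Ico T.a T.b := by rw [P7]
        _ = Set.Ico T.a T.b := by
            rw [IETAux.Phi_image P1 P4 P5 P7 P8 hv hvsum hsub le_rfl le_rfl,
              IETAux.Phi_left P1 P4 hv hsub, IETAux.Phi_right P1 P4 P5 hvsum hsub]
    · -- new levels pairwise disjoint
      intro γ γ' i i' hi hi' hne
      rw [hlev_img γ i hi, hlev_img γ' i' hi', Set.disjoint_left]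
      rintro _ ⟨x, hx, rfl⟩ ⟨y, hy, hxy⟩
      have hx' : x ∈ Set.Ico T.a T.b := by
        rw [IETAux.level_img P5 γ (le_of_lt hi)] at hx
        exact IETAux.level_sub_Iab P4 P5 hsub γ (le_of_lt hi) hx
      have hy' : y ∈ Set.Ico T.a T.b := by
        rw [IETAux.level_img P5 γ' (le_of_lt hi')] at hy
        exact IETAux.level_sub_Iab P4 P5 hsub γ' (le_of_lt hi') hy
      have := hphiInj hy' hx' hxy
      rw [this] at hy
      exact Set.disjoint_left.mp (P8 γ γ' i i' hi hi' hne) hx hy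
  · -- order of the bases
    intro γ γ'
    exact hord (hbase_ab γ) (hbase_ab γ')
  · -- order of the images of the bases
    intro γ γ'
    rw [IETAux.topTower P1 P2 P4 P5 P6 P7 P8 hv hsub hp hq γ (hbase_pt γ),
      IETAux.topTower P1 P2 P4 P5 P6 P7 P8 hv hsub hp hq γ' (hbase_pt γ')]
    exact hordPsi (hlev_ab γ (h γ)) (hlev_ab γ' (h γ'))
  · -- order of all the levels
    intro γ γ' i i' hi hi'
    rw [IETAux.chainTower P1 P2 P4 P5 P6 P7 P8 hv hsub hp hq γ (hbase_pt γ) hi,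
      IETAux.chainTower P1 P2 P4 P5 P6 P7 P8 hv hsub hp hq γ' (hbase_pt γ') hi']
    exact hord (hlev_ab γ i) (hlev_ab γ' i')
end

section
/- Let T = (π, λ) be a non-degenerate interval exchange transformation on I = [a,b), meaning every left endpoint ∂I_α with π₀(α) ≠ 1 is a genuine discontinuity point of T. If T satisfies 𝓘_I ∘ T(x) = T⁻¹ ∘ 𝓘_I(x) for all x ∈ I not equal to any ∂I_α, and the lengths λ_α are pairwise distinct, then T is symmetric, i.e., π₁∘π₀⁻¹(i) = d+1−i for all 1 ≤ i ≤ d. -/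
open MeasureTheory Set
open scoped Classical

namespace IET

variable (T : IET)

/-! ### Auxiliary lemmas for stmt8 -/

/-- Partial sums of lengths in the order given by a permutation `e`. -/
noncomputable def usum (e : Fin T.d ≃ Fin T.d) (i : ℕ) : ℝ :=
  ∑ β ∈ Finset.univ.filter (fun β => (e β : ℕ) < i), T.len β

lemma usum_zero (e : Fin T.d ≃ Fin T.d) : T.usum e 0 = 0 := by
  simp [usum]

lemma usum_top (e : Fin T.d ≃ Fin T.d) {i : ℕ} (hi : T.d ≤ i) :
    T.usum e i = T.b - T.a := by
  rw [← T.len_sum]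
  unfold usum
  congr 1
  apply Finset.filter_true_of_mem
  intro β _
  exact lt_of_lt_of_le (e β).isLt hi

lemma usum_succ (e : Fin T.d ≃ Fin T.d) {i : ℕ} (hi : i < T.d) :
    T.usum e (i + 1) = T.usum e i + T.len (e.symm ⟨i, hi⟩) := by
  have hβ : ∀ β : Fin T.d, (β = e.symm ⟨i, hi⟩) ↔ ((e β : ℕ) = i) := by
    intro β
    rw [Equiv.eq_symm_apply, Fin.ext_iff]
  have hins : Finset.univ.filter (fun β => (e β : ℕ) < i + 1)
      = insert (e.symm ⟨i, hi⟩) (Finset.univ.filter (fun β => (e β : ℕ) < i)) := by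
    ext β
    simp only [Finset.mem_filter, Finset.mem_univ, true_and, Finset.mem_insert, hβ]
    omega
  unfold usum
  rw [hins, Finset.sum_insert (by simp), add_comm]

lemma usum_mono (e : Fin T.d ≃ Fin T.d) {i j : ℕ} (h : i ≤ j) :
    T.usum e i ≤ T.usum e j := by
  apply Finset.sum_le_sum_of_subset_of_nonneg
  · intro β hβ
    simp only [Finset.mem_filter, Finset.mem_univ, true_and] at *
    omega
  · intro β _ _
    exact (T.len_pos β).le

lemma usum_nonneg (e : Fin T.d ≃ Fin T.d) (i : ℕ) : 0 ≤ T.usum e i :=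
  T.usum_zero e ▸ T.usum_mono e (Nat.zero_le i)

lemma usum_strict (e : Fin T.d ≃ Fin T.d) {i j : ℕ} (hij : i < j) (hj : j ≤ T.d) :
    T.usum e i < T.usum e j := by
  have hi : i < T.d := lt_of_lt_of_le hij hj
  calc T.usum e i < T.usum e (i + 1) := by
        rw [T.usum_succ e hi]
        linarith [T.len_pos (e.symm ⟨i, hi⟩)]
    _ ≤ T.usum e j := T.usum_mono e hij

lemma lep_eq (α : Fin T.d) : T.lep α = T.a + T.usum T.perm0 (T.perm0 α : ℕ) := by
  unfold lep usum
  congr 1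

lemma lepImg_eq (α : Fin T.d) : T.lepImg α = T.a + T.usum T.perm1 (T.perm1 α : ℕ) := by
  unfold lepImg usum
  congr 1

lemma interval_eq (α : Fin T.d) : T.interval α
    = Set.Ico (T.a + T.usum T.perm0 (T.perm0 α : ℕ))
        (T.a + T.usum T.perm0 ((T.perm0 α : ℕ) + 1)) := by
  unfold interval
  rw [T.lep_eq, T.usum_succ T.perm0 (T.perm0 α).isLt]
  have h1 : (⟨(T.perm0 α : ℕ), (T.perm0 α).isLt⟩ : Fin T.d) = T.perm0 α := rfl
  rw [h1, Equiv.symm_apply_apply, add_assoc]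

lemma intervalImg_eq (α : Fin T.d) : T.intervalImg α
    = Set.Ico (T.a + T.usum T.perm1 (T.perm1 α : ℕ))
        (T.a + T.usum T.perm1 ((T.perm1 α : ℕ) + 1)) := by
  unfold intervalImg
  rw [T.lepImg_eq, T.usum_succ T.perm1 (T.perm1 α).isLt]
  have h1 : (⟨(T.perm1 α : ℕ), (T.perm1 α).isLt⟩ : Fin T.d) = T.perm1 α := rfl
  rw [h1, Equiv.symm_apply_apply, add_assoc]

lemma exists_piece (e : Fin T.d ≃ Fin T.d) {x : ℝ} (hx : x ∈ Set.Ico T.a T.b) :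
    ∃ α : Fin T.d, (T.a + T.usum e (e α : ℕ) ≤ x ∧ x < T.a + T.usum e ((e α : ℕ) + 1)) := by
  classical
  set P : ℕ → Prop := fun i => T.a + T.usum e i ≤ x with hPdef
  have hP0 : P 0 := by
    simp only [hPdef, T.usum_zero e, add_zero]
    exact hx.1
  set i := Nat.findGreatest P T.d with hidef
  have hile : i ≤ T.d := Nat.findGreatest_le T.d
  have hPi : P i := Nat.findGreatest_spec (Nat.zero_le _) hP0
  have hid : i < T.d := by
    rcases lt_or_eq_of_le hile with h | h
    · exact h
    · exfalso
      have h2 : T.usum e i = T.b - T.a := T.usum_top e (le_of_eq h.symm)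
      have := hx.2
      simp only [hPdef] at hPi
      rw [h2] at hPi
      linarith
  have hnot : ¬ P (i + 1) := Nat.findGreatest_is_greatest (Nat.lt_succ_self i) hid
  refine ⟨e.symm ⟨i, hid⟩, ?_, ?_⟩
  · simpa using hPi
  · have : (e (e.symm ⟨i, hid⟩) : ℕ) = i := by simp
    rw [this]
    exact lt_of_not_ge hnot

lemma piece_unique (e : Fin T.d ≃ Fin T.d) {x : ℝ} {i j : ℕ} (hi : i < T.d) (hj : j < T.d)
    (h1 : T.a + T.usum e i ≤ x) (h2 : x < T.a + T.usum e (i + 1))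
    (h3 : T.a + T.usum e j ≤ x) (h4 : x < T.a + T.usum e (j + 1)) : i = j := by
  by_contra hne
  rcases Nat.lt_or_ge i j with h | h
  · have : T.usum e (i + 1) ≤ T.usum e j := T.usum_mono e h
    linarith
  · have hji : j < i := by omega
    have : T.usum e (j + 1) ≤ T.usum e i := T.usum_mono e hji
    linarith

lemma exists_mem_interval {x : ℝ} (hx : x ∈ Set.Ico T.a T.b) : ∃ α, x ∈ T.interval α := by
  obtain ⟨α, h1, h2⟩ := T.exists_piece T.perm0 hx
  exact ⟨α, by rw [T.interval_eq]; exact ⟨h1, h2⟩⟩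

lemma exists_mem_intervalImg {x : ℝ} (hx : x ∈ Set.Ico T.a T.b) :
    ∃ α, x ∈ T.intervalImg α := by
  obtain ⟨α, h1, h2⟩ := T.exists_piece T.perm1 hx
  exact ⟨α, by rw [T.intervalImg_eq]; exact ⟨h1, h2⟩⟩

lemma interval_unique {x : ℝ} {α γ : Fin T.d}
    (hα : x ∈ T.interval α) (hγ : x ∈ T.interval γ) : α = γ := by
  rw [T.interval_eq] at hα hγ
  have := T.piece_unique T.perm0 (T.perm0 α).isLt (T.perm0 γ).isLt hα.1 hα.2 hγ.1 hγ.2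
  exact T.perm0.injective (Fin.ext this)

lemma intervalImg_unique {x : ℝ} {α γ : Fin T.d}
    (hα : x ∈ T.intervalImg α) (hγ : x ∈ T.intervalImg γ) : α = γ := by
  rw [T.intervalImg_eq] at hα hγ
  have := T.piece_unique T.perm1 (T.perm1 α).isLt (T.perm1 γ).isLt hα.1 hα.2 hγ.1 hγ.2
  exact T.perm1.injective (Fin.ext this)

lemma toFun_eq {x : ℝ} {α : Fin T.d} (hα : x ∈ T.interval α) :
    T.toFun x = x + T.transl α := by
  have hs : (∑ β, if x ∈ T.interval β then T.transl β else 0) = T.transl α := by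
    rw [Finset.sum_eq_single α
      (fun β _ hβ => if_neg (fun hmem => hβ (T.interval_unique hmem hα)))
      (fun h => absurd (Finset.mem_univ α) h)]
    exact if_pos hα
  unfold toFun
  rw [hs]

lemma invFun_eq {x : ℝ} {α : Fin T.d} (hα : x ∈ T.intervalImg α) :
    T.invFun x = x - T.transl α := by
  have hs : (∑ β, if x ∈ T.intervalImg β then -T.transl β else 0) = -T.transl α := by
    rw [Finset.sum_eq_single α
      (fun β _ hβ => if_neg (fun hmem => hβ (T.intervalImg_unique hmem hα)))
      (fun h => absurd (Finset.mem_univ α) h)]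
    exact if_pos hα
  unfold invFun
  rw [hs]
  ring

lemma interval_subset (α : Fin T.d) : T.interval α ⊆ Set.Ico T.a T.b := by
  rw [T.interval_eq]
  intro x hx
  obtain ⟨hx1, hx2⟩ := hx
  constructor
  · have := T.usum_nonneg T.perm0 (T.perm0 α : ℕ)
    linarith
  · have h1 : T.usum T.perm0 ((T.perm0 α : ℕ) + 1) ≤ T.usum T.perm0 T.d :=
      T.usum_mono T.perm0 (T.perm0 α).isLt
    have h2 : T.usum T.perm0 T.d = T.b - T.a := T.usum_top T.perm0 le_rfl
    linarith

lemma lep_mem_interval (α : Fin T.d) : T.lep α ∈ T.interval α :=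
  ⟨le_rfl, by linarith [T.len_pos α]⟩

lemma ne_lep_of_mem_open {x : ℝ} {α : Fin T.d}
    (h1 : T.lep α < x) (h2 : x < T.lep α + T.len α) (γ : Fin T.d) : x ≠ T.lep γ := by
  intro hx
  have hxα : x ∈ T.interval α := ⟨h1.le, h2⟩
  have hxγ : x ∈ T.interval γ := hx ▸ T.lep_mem_interval γ
  have hγα : γ = α := T.interval_unique hxγ hxα
  rw [hγα] at hx
  exact absurd hx (ne_of_gt h1)

lemma continuousAt_of_transl_eq {α α' : Fin T.d}
    (hadj : T.lep α = T.lep α' + T.len α') (htr : T.transl α = T.transl α') :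
    ContinuousAt T.toFun (T.lep α) := by
  set δ := min (T.len α) (T.len α') with hδ
  have hδ1 : δ ≤ T.len α := min_le_left _ _
  have hδ2 : δ ≤ T.len α' := min_le_right _ _
  have hδpos : 0 < δ := lt_min (T.len_pos α) (T.len_pos α')
  have hev : ∀ y ∈ Set.Ioo (T.lep α - δ) (T.lep α + δ), T.toFun y = y + T.transl α := by
    intro y hy
    rcases le_or_gt (T.lep α) y with h | h
    · exact T.toFun_eq ⟨h, lt_of_lt_of_le hy.2 (by linarith)⟩
    · have hmem : y ∈ T.interval α' := by
        have h1 := hy.1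
        rw [hadj] at h1
        exact ⟨by linarith, by rw [← hadj]; exact h⟩
      rw [T.toFun_eq hmem, htr]
  have hc : ContinuousAt (fun y : ℝ => y + T.transl α) (T.lep α) :=
    (continuous_id.add continuous_const).continuousAt
  apply hc.congr
  filter_upwards [Ioo_mem_nhds (by linarith : T.lep α - δ < T.lep α)
    (by linarith : T.lep α < T.lep α + δ)] with y hy
  exact (hev y hy).symm

/-- Key lemma: the reflection of each interior left endpoint of the domain partition
is an interior left endpoint of the image partition. -/
lemma refl_lep_mem
    (hnd : ∀ α : Fin T.d, (T.perm0 α : ℕ) ≠ 0 → ¬ ContinuousAt T.toFun (T.lep α))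
    (hconj : ∀ x ∈ Set.Ico T.a T.b, (∀ α : Fin T.d, x ≠ T.lep α) →
      T.refl (T.toFun x) = T.invFun (T.refl x))
    (α : Fin T.d) (hα : (T.perm0 α : ℕ) ≠ 0) :
    ∃ β : Fin T.d, (T.perm1 β : ℕ) ≠ 0 ∧ T.a + T.b - T.lep α = T.lepImg β := by
  have hid : (T.perm0 α : ℕ) < T.d := (T.perm0 α).isLt
  have hlepa : T.a < T.lep α := by
    rw [T.lep_eq]
    have : (0 : ℝ) < T.usum T.perm0 (T.perm0 α : ℕ) := by
      have := T.usum_strict T.perm0 (Nat.pos_of_ne_zero hα) hid.le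
      rwa [T.usum_zero] at this
    linarith
  have hlepb : T.lep α < T.b := ((T.interval_subset α) (T.lep_mem_interval α)).2
  set c := T.a + T.b - T.lep α with hc
  have hca : T.a < c := by simp only [hc]; linarith
  have hcb : c < T.b := by simp only [hc]; linarith
  obtain ⟨β, hβ⟩ := T.exists_mem_intervalImg (x := c) ⟨hca.le, hcb⟩
  rcases eq_or_lt_of_le hβ.1 with heq | hlt
  · refine ⟨β, ?_, heq.symm⟩
    intro h0
    have : T.lepImg β = T.a := by
      rw [T.lepImg_eq, h0, T.usum_zero, add_zero]
    rw [this] at heq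
    exact absurd heq (ne_of_lt hca)
  · exfalso
    -- set up the adjacent interval α'
    set i := (T.perm0 α : ℕ) with hi
    have hi1 : i - 1 < T.d := by omega
    set α' := T.perm0.symm ⟨i - 1, hi1⟩ with hα'
    have hpα' : (T.perm0 α' : ℕ) = i - 1 := by simp [hα']
    have hadj : T.lep α = T.lep α' + T.len α' := by
      rw [T.lep_eq α, T.lep_eq α', hpα', ← hi]
      have hsucc := T.usum_succ T.perm0 hi1
      have h2 : i - 1 + 1 = i := by omega
      rw [h2] at hsucc
      rw [hsucc, ← hα']
      ring
    -- choose epsilon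
    set ε := (min (min (c - T.lepImg β) (T.lepImg β + T.len β - c))
      (min (T.len α) (T.len α'))) / 2 with hε
    have hm1 : 0 < c - T.lepImg β := by linarith
    have hm2 : 0 < T.lepImg β + T.len β - c := by linarith [hβ.2]
    have hm3 : 0 < T.len α := T.len_pos α
    have hm4 : 0 < T.len α' := T.len_pos α'
    have hmin : 0 < min (min (c - T.lepImg β) (T.lepImg β + T.len β - c))
        (min (T.len α) (T.len α')) := lt_min (lt_min hm1 hm2) (lt_min hm3 hm4)
    have hεpos : 0 < ε := by positivity
    have hε1 : ε < c - T.lepImg β := by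
      have h := min_le_of_left_le (c := min (T.len α) (T.len α'))
        (min_le_left (c - T.lepImg β) (T.lepImg β + T.len β - c))
      simp only [hε]; linarith
    have hε2 : ε < T.lepImg β + T.len β - c := by
      have h := min_le_of_left_le (c := min (T.len α) (T.len α'))
        (min_le_right (c - T.lepImg β) (T.lepImg β + T.len β - c))
      simp only [hε]; linarith
    have hε3 : ε < T.len α := by
      have h := min_le_of_right_le (b := min (c - T.lepImg β) (T.lepImg β + T.len β - c))
        (min_le_left (T.len α) (T.len α'))
      simp only [hε]; linarith
    have hε4 : ε < T.len α' := by
      have h := min_le_of_right_le (b := min (c - T.lepImg β) (T.lepImg β + T.len β - c))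
        (min_le_right (T.len α) (T.len α'))
      simp only [hε]; linarith
    -- the point x₁ = lep α + ε
    have htαβ : T.transl α = T.transl β := by
      set x₁ := T.lep α + ε with hx₁
      have hx₁mem : x₁ ∈ T.interval α := ⟨by linarith, by simp only [hx₁]; linarith⟩
      have hx₁ne : ∀ γ, x₁ ≠ T.lep γ :=
        T.ne_lep_of_mem_open (α := α) (by linarith) (by simp only [hx₁]; linarith)
      have h1 := hconj x₁ (T.interval_subset α hx₁mem) hx₁ne
      have hrx₁ : T.refl x₁ = c - ε := by
        simp only [IET.refl, hx₁, hc]; ring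
      have hrmem : c - ε ∈ T.intervalImg β := ⟨by linarith, by linarith [hβ.2]⟩
      rw [T.toFun_eq hx₁mem, hrx₁, T.invFun_eq hrmem] at h1
      simp only [IET.refl, hx₁, hc] at h1
      linarith
    have htα'β : T.transl α' = T.transl β := by
      set x₂ := T.lep α - ε with hx₂
      have hx₂lt : T.lep α' < x₂ := by simp only [hx₂]; linarith [hadj]
      have hx₂lt2 : x₂ < T.lep α' + T.len α' := by
        rw [← hadj]; simp only [hx₂]; linarith
      have hx₂mem : x₂ ∈ T.interval α' := ⟨hx₂lt.le, hx₂lt2⟩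
      have hx₂ne : ∀ γ, x₂ ≠ T.lep γ := T.ne_lep_of_mem_open (α := α') hx₂lt hx₂lt2
      have h2 := hconj x₂ (T.interval_subset α' hx₂mem) hx₂ne
      have hrx₂ : T.refl x₂ = c + ε := by
        simp only [IET.refl, hx₂, hc]; ring
      have hrmem : c + ε ∈ T.intervalImg β := ⟨by linarith, by linarith [hβ.2]⟩
      rw [T.toFun_eq hx₂mem, hrx₂, T.invFun_eq hrmem] at h2
      simp only [IET.refl, hx₂, hc] at h2
      linarith
    exact hnd α hα (T.continuousAt_of_transl_eq hadj (htαβ.trans htα'β.symm))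

end IET

open IET

/-- a non-degenerate IET satisfying the reflection conjugacy
`𝓘_I ∘ T = T⁻¹ ∘ 𝓘_I` away from the left endpoints, with pairwise distinct lengths,
is symmetric. -/
theorem stmt8 (T : IET)
    (hnd : ∀ α : Fin T.d, (T.perm0 α : ℕ) ≠ 0 → ¬ ContinuousAt T.toFun (T.lep α))
    (hconj : ∀ x ∈ Set.Ico T.a T.b, (∀ α : Fin T.d, x ≠ T.lep α) →
      T.refl (T.toFun x) = T.invFun (T.refl x))
    (hlen : Function.Injective T.len) :
    T.IsSymm := by
  classical
  -- For every i ≤ d there is k ≤ d with v k = (b - a) - u i.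
  have hKex : ∀ i : ℕ, ∃ k : ℕ, k ≤ T.d ∧
      (i ≤ T.d → T.usum T.perm1 k = (T.b - T.a) - T.usum T.perm0 i) := by
    intro i
    rcases Nat.lt_or_ge T.d i with hgt | hle
    · exact ⟨0, Nat.zero_le _, fun h => absurd h (by omega)⟩
    rcases Nat.eq_zero_or_pos i with h0 | hpos
    · refine ⟨T.d, le_rfl, fun _ => ?_⟩
      rw [h0, T.usum_zero, T.usum_top T.perm1 le_rfl]
      ring
    rcases eq_or_lt_of_le hle with hd | hlt
    · refine ⟨0, Nat.zero_le _, fun _ => ?_⟩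
      rw [T.usum_zero, hd, T.usum_top T.perm0 le_rfl]
      ring
    · set α := T.perm0.symm ⟨i, hlt⟩ with hαdef
      have hpα : (T.perm0 α : ℕ) = i := by simp [hαdef]
      obtain ⟨β, hβ0, hβ⟩ := T.refl_lep_mem hnd hconj α (by omega)
      refine ⟨(T.perm1 β : ℕ), (T.perm1 β).isLt.le, fun _ => ?_⟩
      rw [T.lep_eq, hpα, T.lepImg_eq] at hβ
      linarith
  choose K hK1 hK2 using hKex
  -- K is strictly antitone on [0, d]
  have hanti : ∀ i j : ℕ, j ≤ T.d → i < j → K j < K i := by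
    intro i j hj hij
    by_contra h
    push_neg at h
    have h1 : T.usum T.perm1 (K i) ≤ T.usum T.perm1 (K j) := T.usum_mono _ h
    have h2 : T.usum T.perm0 i < T.usum T.perm0 j := T.usum_strict _ hij hj
    rw [hK2 i (by omega), hK2 j hj] at h1
    linarith
  have hstep : ∀ n i j : ℕ, j ≤ T.d → i + n = j → K j + n ≤ K i := by
    intro n
    induction n with
    | zero =>
      intro i j hj h
      have : j = i := by omega
      subst this
      simp
    | succ n ih =>
      intro i j hj h
      have h1 : K (i + n) + n ≤ K i := ih i (i + n) (by omega) rfl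
      have h2 : K j < K (i + n) := hanti (i + n) j hj (by omega)
      omega
  have hK0 : K 0 = T.d := by
    by_contra h
    have hlt : K 0 < T.d := lt_of_le_of_ne (hK1 _) h
    have hs := T.usum_strict T.perm1 hlt le_rfl
    rw [hK2 0 (Nat.zero_le _), T.usum_zero, T.usum_top T.perm1 le_rfl] at hs
    linarith
  have hKd : K T.d = 0 := by
    by_contra h
    have hpos : 0 < K T.d := Nat.pos_of_ne_zero h
    have hs := T.usum_strict T.perm1 hpos (hK1 _)
    rw [T.usum_zero, hK2 T.d le_rfl, T.usum_top T.perm0 le_rfl] at hs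
    linarith
  have hKval : ∀ i : ℕ, i ≤ T.d → K i = T.d - i := by
    intro i hi
    have h1 : K i + i ≤ K 0 := hstep i 0 i hi (by omega)
    have h2 : K T.d + (T.d - i) ≤ K i := hstep (T.d - i) i T.d le_rfl (by omega)
    omega
  -- conclude
  intro α
  set i := (T.perm0 α : ℕ) with hi
  have hid : i < T.d := (T.perm0 α).isLt
  have hu1 : T.usum T.perm0 i = (T.b - T.a) - T.usum T.perm1 (T.d - i) := by
    have h := hK2 i hid.le
    rw [hKval i hid.le] at h
    linarith
  have hu2 : T.usum T.perm0 (i + 1) = (T.b - T.a) - T.usum T.perm1 (T.d - i - 1) := by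
    have h := hK2 (i + 1) hid
    rw [hKval (i + 1) hid] at h
    have hdd : T.d - (i + 1) = T.d - i - 1 := by omega
    rw [hdd] at h
    linarith
  have hlen1 : T.usum T.perm0 (i + 1) = T.usum T.perm0 i + T.len α := by
    have h1 : (⟨i, hid⟩ : Fin T.d) = T.perm0 α := Fin.ext hi.symm
    rw [T.usum_succ T.perm0 hid, h1, Equiv.symm_apply_apply]
  have hj : T.d - i - 1 < T.d := by omega
  have hlen2 : T.usum T.perm1 (T.d - i) = T.usum T.perm1 (T.d - i - 1)
      + T.len (T.perm1.symm ⟨T.d - i - 1, hj⟩) := by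
    have h := T.usum_succ T.perm1 hj
    have h2 : T.d - i - 1 + 1 = T.d - i := by omega
    rw [h2] at h
    exact h
  have hfin : T.len α = T.len (T.perm1.symm ⟨T.d - i - 1, hj⟩) := by linarith
  have hα1 : α = T.perm1.symm ⟨T.d - i - 1, hj⟩ := hlen hfin
  have hp1 : (T.perm1 α : ℕ) = T.d - i - 1 := by rw [hα1]; simp
  omega
end
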